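/- arXiv:1505.06296 — 10 statements merged into one kernel-verified Lean document; each statement's English description precedes it below -/
import Mathlib

section
/- Let l > 0 and let X ⊆ ω with |X| = 2^l. Then there exists a family {A_σ : σ ∈ 2^{≤l}} of subsets of X such that: (1) for each m ≤ l, the sets A_σ for σ ∈ 2^m partition X; (2) |A_σ| = 2^{l − |σ|} for each σ, and σ ⊆ τ implies A_τ ⊆ A_σ; (3) for each σ, any two distinct elements i, j of A_σ satisfy |i − j| > 2^{|σ|−1}. -/
private def decodeBits : List Bool → ℕ
  | [] => 0
  | b :: t => (if b then 1 else 0) + 2 * decodeBits t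

private def encodeBits : ℕ → ℕ → List Bool
  | 0, _ => []
  | m + 1, k => (k % 2 == 1) :: encodeBits m (k / 2)

private lemma encodeBits_length (m k : ℕ) : (encodeBits m k).length = m := by
  induction m generalizing k with
  | zero => rfl
  | succ m ih => simp [encodeBits, ih]

private lemma decode_encodeBits (m k : ℕ) : decodeBits (encodeBits m k) = k % 2 ^ m := by
  induction m generalizing k with
  | zero => simp [encodeBits, decodeBits, Nat.mod_one]
  | succ m ih =>
    have h2 : (2 : ℕ) ^ (m + 1) = 2 * 2 ^ m := by ring
    rw [h2, Nat.mod_mul]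
    simp only [encodeBits, decodeBits, ih]
    have : k % 2 = 0 ∨ k % 2 = 1 := Nat.mod_two_eq_zero_or_one k
    rcases this with h | h <;> simp [h]

private lemma decodeBits_lt (σ : List Bool) : decodeBits σ < 2 ^ σ.length := by
  induction σ with
  | nil => simp [decodeBits]
  | cons b t ih =>
    simp only [decodeBits, List.length_cons, pow_succ]
    cases b <;> simp <;> omega

private lemma encode_decodeBits (σ : List Bool) :
    encodeBits σ.length (decodeBits σ) = σ := by
  induction σ with
  | nil => rfl
  | cons b t ih =>
    cases b
    · show encodeBits (t.length + 1) (0 + 2 * decodeBits t) = false :: t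
      have h1 : (0 + 2 * decodeBits t) % 2 = 0 := by omega
      have h2 : (0 + 2 * decodeBits t) / 2 = decodeBits t := by omega
      simp [encodeBits, h1, h2, ih]
    · show encodeBits (t.length + 1) (1 + 2 * decodeBits t) = true :: t
      have h1 : (1 + 2 * decodeBits t) % 2 = 1 := by omega
      have h2 : (1 + 2 * decodeBits t) / 2 = decodeBits t := by omega
      simp [encodeBits, h1, h2, ih]

private lemma decodeBits_append (σ ρ : List Bool) :
    decodeBits (σ ++ ρ) = decodeBits σ + 2 ^ σ.length * decodeBits ρ := by
  induction σ with
  | nil => simp [decodeBits]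
  | cons b t ih =>
    rw [List.cons_append,
      show decodeBits (b :: (t ++ ρ)) = (if b then 1 else 0) + 2 * decodeBits (t ++ ρ) from rfl,
      show decodeBits (b :: t) = (if b then 1 else 0) + 2 * decodeBits t from rfl,
      ih, List.length_cons, pow_succ]
    ring

private lemma mono_gap {N : ℕ} (f : Fin N → ℕ) (hf : StrictMono f) :
    ∀ d : ℕ, ∀ a b : Fin N, a.val + d = b.val → f a + d ≤ f b := by
  intro d
  induction d with
  | zero =>
    intro a b h
    have : a = b := Fin.ext (by omega)
    subst this
    omega
  | succ d ih =>
    intro a b h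
    have hc : a.val + d < N := by omega
    have h1 := ih a ⟨a.val + d, hc⟩ rfl
    have h2 : f ⟨a.val + d, hc⟩ < f b := hf (by simp [Fin.lt_def]; omega)
    omega

private lemma card_filter_mod (L m d : ℕ) (hm : m ≤ L) (hd : d < 2 ^ m) :
    ((Finset.univ : Finset (Fin (2 ^ L))).filter
      (fun k => k.val % 2 ^ m = d)).card = 2 ^ (L - m) := by
  have hsplit : 2 ^ m * 2 ^ (L - m) = 2 ^ L := by
    rw [← pow_add]; congr 1; omega
  symm
  have := Finset.card_bij'
    (s := (Finset.univ : Finset (Fin (2 ^ (L - m)))))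
    (t := (Finset.univ : Finset (Fin (2 ^ L))).filter (fun k => k.val % 2 ^ m = d))
    (i := fun j _ => (⟨d + 2 ^ m * j.val, by
        calc d + 2 ^ m * j.val < 2 ^ m + 2 ^ m * j.val := by omega
        _ = 2 ^ m * (j.val + 1) := by ring
        _ ≤ 2 ^ m * 2 ^ (L - m) := by
            exact Nat.mul_le_mul_left _ (by omega)
        _ = 2 ^ L := hsplit⟩ : Fin (2 ^ L)))
    (j := fun k _ => (⟨k.val / 2 ^ m, by
        have hk : k.val < 2 ^ L := k.isLt
        have : k.val < 2 ^ m * 2 ^ (L - m) := by omega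
        exact Nat.div_lt_of_lt_mul this⟩ : Fin (2 ^ (L - m))))
    ?_ ?_ ?_ ?_
  · simpa using this
  · intro a _
    simp [Nat.add_mul_mod_self_left, Nat.mod_eq_of_lt hd]
  · intro a _; simp
  · intro a _
    apply Fin.ext
    simp
    rw [Nat.add_mul_div_left _ _ (by positivity)]
    rw [Nat.div_eq_of_lt hd]; omega
  · intro a ha
    simp at ha
    apply Fin.ext
    simp
    have := Nat.mod_add_div a.val (2 ^ m)
    omega

/-- tree of partitions of a set `X` of size `2^l` into pieces indexed by
binary sequences of length at most `l`, with the stated cardinality, refinement and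
separation properties. -/
theorem stmt_1 (l : ℕ) (hl : 0 < l) (X : Finset ℕ) (hX : X.card = 2 ^ l) :
    ∃ A : List Bool → Finset ℕ,
      (∀ m ≤ l,
        (∀ x ∈ X, ∃ σ : List Bool, σ.length = m ∧ x ∈ A σ) ∧
        ∀ σ τ : List Bool, σ.length = m → τ.length = m → σ ≠ τ → Disjoint (A σ) (A τ)) ∧
      (∀ σ : List Bool, σ.length ≤ l → A σ ⊆ X ∧ (A σ).card = 2 ^ (l - σ.length)) ∧
      (∀ σ τ : List Bool, τ.length ≤ l → σ <+: τ → A τ ⊆ A σ) ∧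
      (∀ σ : List Bool, σ.length ≤ l → ∀ x ∈ A σ, ∀ y ∈ A σ, x ≠ y →
        (2 : ℝ) ^ ((σ.length : ℤ) - 1) < |(x : ℝ) - (y : ℝ)|) := by
  set e := X.orderIsoOfFin hX with he
  set f : Fin (2 ^ l) → ℕ := fun k => (e k : ℕ) with hf
  have hfmono : StrictMono f := fun a b h => by
    exact_mod_cast e.strictMono h
  have hfinj : Function.Injective f := hfmono.injective
  refine ⟨fun σ => (Finset.univ.filter
    (fun k : Fin (2 ^ l) => k.val % 2 ^ σ.length = decodeBits σ)).image f, ?_, ?_, ?_, ?_⟩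
  · intro m hm
    constructor
    · intro x hx
      refine ⟨encodeBits m (e.symm ⟨x, hx⟩).val, encodeBits_length _ _, ?_⟩
      simp only [Finset.mem_image, Finset.mem_filter, Finset.mem_univ, true_and]
      refine ⟨e.symm ⟨x, hx⟩, ?_, ?_⟩
      · rw [encodeBits_length, decode_encodeBits]
      · simp [hf]
    · intro σ τ hσ hτ hne
      rw [Finset.disjoint_left]
      intro x hx hx'
      simp only [Finset.mem_image, Finset.mem_filter, Finset.mem_univ, true_and] at hx hx'
      obtain ⟨k, hk, hkx⟩ := hx
      obtain ⟨k', hk', hkx'⟩ := hx'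
      have : k = k' := hfinj (hkx.trans hkx'.symm)
      subst this
      apply hne
      have hd : decodeBits σ = decodeBits τ := by
        rw [← hk, ← hk', hσ, hτ]
      calc σ = encodeBits σ.length (decodeBits σ) := (encode_decodeBits σ).symm
        _ = encodeBits τ.length (decodeBits τ) := by rw [hσ, hτ, hd]
        _ = τ := encode_decodeBits τ
  · intro σ hσ
    constructor
    · intro x hx
      simp only [Finset.mem_image] at hx
      obtain ⟨k, _, hkx⟩ := hx
      rw [← hkx]; exact (e k).2
    · rw [Finset.card_image_of_injective _ hfinj]
      exact card_filter_mod l σ.length (decodeBits σ) hσ (decodeBits_lt σ)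
  · intro σ τ hτ hpre
    obtain ⟨ρ, hρ⟩ := hpre
    intro x hx
    simp only [Finset.mem_image, Finset.mem_filter, Finset.mem_univ, true_and] at hx ⊢
    obtain ⟨k, hk, hkx⟩ := hx
    refine ⟨k, ?_, hkx⟩
    have hdvd : (2 : ℕ) ^ σ.length ∣ 2 ^ τ.length := by
      apply pow_dvd_pow
      rw [← hρ]; simp
    calc k.val % 2 ^ σ.length = (k.val % 2 ^ τ.length) % 2 ^ σ.length :=
          (Nat.mod_mod_of_dvd _ hdvd).symm
      _ = decodeBits τ % 2 ^ σ.length := by rw [hk]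
      _ = decodeBits σ := by
          rw [← hρ, decodeBits_append, Nat.add_mul_mod_self_left,
            Nat.mod_eq_of_lt (decodeBits_lt σ)]
  · intro σ hσ x hx y hy hxy
    simp only [Finset.mem_image, Finset.mem_filter, Finset.mem_univ, true_and] at hx hy
    obtain ⟨k, hk, hkx⟩ := hx
    obtain ⟨k', hk', hky⟩ := hy
    have hkk' : k ≠ k' := by
      intro h; apply hxy; rw [← hkx, ← hky, h]
    -- the two ranks differ by at least 2^|σ|
    have key : ∀ a b : Fin (2 ^ l), a.val < b.val →
        a.val % 2 ^ σ.length = decodeBits σ → b.val % 2 ^ σ.length = decodeBits σ →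
        f a + 2 ^ σ.length ≤ f b := by
      intro a b hab ha hb
      have hmod : a.val ≡ b.val [MOD 2 ^ σ.length] := by
        unfold Nat.ModEq; rw [ha, hb]
      have hdvd : 2 ^ σ.length ∣ b.val - a.val :=
        (Nat.modEq_iff_dvd' (le_of_lt hab)).mp hmod
      have hge : 2 ^ σ.length ≤ b.val - a.val :=
        Nat.le_of_dvd (by omega) hdvd
      have := mono_gap f hfmono (b.val - a.val) a b (by omega)
      omega
    have hnat : x + 2 ^ σ.length ≤ y ∨ y + 2 ^ σ.length ≤ x := by
      rcases lt_trichotomy k.val k'.val with h | h | h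
      · left; have := key k k' h hk hk'; omega
      · exact absurd (Fin.ext h) hkk'
      · right; have := key k' k h hk' hk; omega
    have h1 : (2 : ℝ) ^ σ.length ≤ |(x : ℝ) - (y : ℝ)| := by
      have hp : (0 : ℝ) < 2 ^ σ.length := by positivity
      rcases hnat with h | h
      · have hc : (x : ℝ) + 2 ^ σ.length ≤ (y : ℝ) := by exact_mod_cast h
        rw [abs_sub_comm, abs_of_nonneg (by linarith)]
        linarith
      · have hc : (y : ℝ) + 2 ^ σ.length ≤ (x : ℝ) := by exact_mod_cast h
        rw [abs_of_nonneg (by linarith)]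
        linarith
    calc (2 : ℝ) ^ ((σ.length : ℤ) - 1) < (2 : ℝ) ^ ((σ.length : ℤ)) := by
          apply zpow_lt_zpow_right₀ (by norm_num); omega
      _ = (2 : ℝ) ^ σ.length := by
          rw [zpow_natCast]
      _ ≤ |(x : ℝ) - (y : ℝ)| := h1
end

section
/- There exists a family D of interval partitions such that: (1) |D| ≤ 𝔡; (2) for each I ∈ D and each n, there exists l_n with l_n > 0, l_n ≥ n, and |I_n| = 2^{l_n}; (3) for every interval partition J there exists I ∈ D such that for all but finitely many n there exists k > n with J_k ⊆ I_n. -/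
open Cardinal Filter

/-- An interval partition of `ω`: a strictly increasing sequence starting at `0`;
its `n`-th interval is `[i n, i (n+1))`. -/
def IsIntervalPartition (i : ℕ → ℕ) : Prop := i 0 = 0 ∧ StrictMono i

/-- The dominating number `𝔡`. -/
noncomputable def dominatingNumber : Cardinal :=
  sInf {c | ∃ F : Set (ℕ → ℕ), #↥F = c ∧
    ∀ g : ℕ → ℕ, ∃ f ∈ F, ∀ᶠ n in atTop, g n ≤ f n}

/-! Take a dominating family `F` of size `𝔡`. Every `f ∈ F` yields a partition `I^f` whose
`n`-th interval has length `2^l` with `l > n` and `f (I^f_n) < I^f_{n+1}`. Given `J`, pick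
`f ∈ F` dominating `m ↦ J_{m+2}`. For almost all `n`, the interval `J_k` with `k = I^f_n + 1 > n`
satisfies `J_k ≥ k > I^f_n` and `J_{k+1} = J_{I^f_n + 2} ≤ f (I^f_n) < I^f_{n+1}`. -/

theorem exists_dominating_family_mk_eq_dominatingNumber :
    ∃ F : Set (ℕ → ℕ), #↥F = dominatingNumber ∧
      ∀ g : ℕ → ℕ, ∃ f ∈ F, ∀ᶠ n in atTop, g n ≤ f n :=
  csInf_mem (s := {c | ∃ F : Set (ℕ → ℕ), #↥F = c ∧
    ∀ g : ℕ → ℕ, ∃ f ∈ F, ∀ᶠ n in atTop, g n ≤ f n})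
    ⟨_, Set.univ, rfl, fun g => ⟨g, trivial, Eventually.of_forall fun _ => le_rfl⟩⟩

noncomputable def dyadicPartition (f : ℕ → ℕ) : ℕ → ℕ
  | 0 => 0
  | n + 1 => dyadicPartition f n + 2 ^ (max n (Nat.log 2 (f (dyadicPartition f n))) + 1)

namespace dyadicPartition

variable (f : ℕ → ℕ)

theorem succ_sub (n : ℕ) :
    dyadicPartition f (n + 1) - dyadicPartition f n =
      2 ^ (max n (Nat.log 2 (f (dyadicPartition f n))) + 1) :=
  Nat.add_sub_cancel_left _ _

theorem strictMono : StrictMono (dyadicPartition f) :=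
  strictMono_nat_of_lt_succ fun _ => Nat.lt_add_of_pos_right (Nat.two_pow_pos _)

theorem isIntervalPartition : IsIntervalPartition (dyadicPartition f) :=
  ⟨rfl, strictMono f⟩

theorem lt_succ (n : ℕ) : f (dyadicPartition f n) < dyadicPartition f (n + 1) :=
  calc f (dyadicPartition f n)
      < 2 ^ (Nat.log 2 (f (dyadicPartition f n)) + 1) := Nat.lt_pow_succ_log_self one_lt_two _
    _ ≤ 2 ^ (max n (Nat.log 2 (f (dyadicPartition f n))) + 1) :=
        Nat.pow_le_pow_right two_pos (Nat.succ_le_succ (le_max_right _ _))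
    _ ≤ dyadicPartition f (n + 1) := Nat.le_add_left _ _

end dyadicPartition

theorem eventually_exists_Ico_subset_Ico {i j f : ℕ → ℕ} (hj : StrictMono j) (hi : StrictMono i)
    (hf : ∀ᶠ m in atTop, j (m + 2) ≤ f m) (hfi : ∀ n, f (i n) ≤ i (n + 1)) :
    ∀ᶠ n in atTop, ∃ k > n, Set.Ico (j k) (j (k + 1)) ⊆ Set.Ico (i n) (i (n + 1)) := by
  filter_upwards [hi.tendsto_atTop.eventually hf] with n hn
  refine ⟨i n + 1, Nat.lt_succ_of_le hi.le_apply, Set.Ico_subset_Ico ?_ (hn.trans (hfi n))⟩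
  exact (Nat.le_succ _).trans hj.le_apply

/-- there is a family `D` of interval partitions of size at most `𝔡`,
each of whose intervals has length a power `2^{l_n}` with `0 < l_n` and `l_n ≥ n`,
such that every interval partition `J` has, for all but finitely many `n`, some
interval `J_k` with `k > n` contained in the `n`-th interval of some member of `D`. -/
theorem stmt_2 : ∃ D : Set (ℕ → ℕ),
    (∀ i ∈ D, IsIntervalPartition i) ∧
    #↥D ≤ dominatingNumber ∧
    (∀ i ∈ D, ∀ n : ℕ, ∃ l : ℕ, 0 < l ∧ n ≤ l ∧ i (n + 1) - i n = 2 ^ l) ∧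
    (∀ j : ℕ → ℕ, IsIntervalPartition j → ∃ i ∈ D, ∀ᶠ n in atTop,
      ∃ k > n, Set.Ico (j k) (j (k + 1)) ⊆ Set.Ico (i n) (i (n + 1))) := by
  obtain ⟨F, hFcard, hFdom⟩ := exists_dominating_family_mk_eq_dominatingNumber
  refine ⟨dyadicPartition '' F, ?_, mk_image_le.trans hFcard.le, ?_, ?_⟩
  · rintro _ ⟨f, -, rfl⟩
    exact dyadicPartition.isIntervalPartition f
  · rintro _ ⟨f, -, rfl⟩ n
    exact ⟨_, Nat.succ_pos _, Nat.le_succ_of_le (le_max_left _ _), dyadicPartition.succ_sub f n⟩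
  · rintro j ⟨-, hj⟩
    obtain ⟨f, hfF, hf⟩ := hFdom fun m => j (m + 2)
    exact ⟨dyadicPartition f, ⟨f, hfF, rfl⟩, eventually_exists_Ico_subset_Ico hj
      (dyadicPartition.strictMono f) hf fun n => (dyadicPartition.lt_succ f n).le⟩
end

section
/- cov*(𝒵₀) ≤ 𝔡, where 𝒵₀ is the ideal of subsets of ω of asymptotic density 0. That is, there exists a family F ⊆ 𝒵₀ of cardinality at most 𝔡 such that every infinite subset of ω has infinite intersection with some member of F. -/
open Cardinal Filter

/-- `A ⊆ ω` has asymptotic density 0. -/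
def densityZero (A : Set ℕ) : Prop :=
  Tendsto (fun n : ℕ => (Nat.card ↥(A ∩ Set.Iio n) : ℝ) / n) atTop (nhds 0)

/-!
Given `f`, cut `ℕ` into windows `[N k, N (k + 1))` that grow faster than `f` and have
`2 ^ k ∣ N k`, and in window `k` keep only the residue class of `k` modulo `2 ^ log₂ k`.
Beyond `N (2 ^ i)` every aligned block of length `2 ^ i` lies in one window and so contains at
most one kept point, hence the trap set has density zero. As `k` runs through `[2 ^ i, 2 ^ (i+1))`
the kept classes run through all residues modulo `2 ^ i`, one of which meets a given infinite
`A` infinitely often; if `f` dominates the function bounding the next point of `A` in each such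
class, the corresponding windows catch points of `A`.
-/

lemma card_inter_Iio_le_of_injOn_div {S : Set ℕ} {d M : ℕ}
    (hinj : Set.InjOn (· / d) (S ∩ Set.Ici M)) (X : ℕ) :
    Nat.card ↥(S ∩ Set.Iio X) ≤ M + (X / d + 1) := by
  have hsub : S ∩ Set.Iio X ⊆ Set.Iio M ∪ (S ∩ Set.Ici M ∩ Set.Iio X) := by
    rintro n ⟨hnS, hnX⟩
    by_cases hnM : n < M
    · exact Or.inl hnM
    · exact Or.inr ⟨⟨hnS, le_of_not_gt hnM⟩, hnX⟩
  have himage : (· / d) '' (S ∩ Set.Ici M ∩ Set.Iio X) ⊆ Set.Iic (X / d) := by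
    rintro _ ⟨n, ⟨-, hnX⟩, rfl⟩
    exact Nat.div_le_div_right (le_of_lt hnX)
  rw [Nat.card_coe_set_eq]
  calc (S ∩ Set.Iio X).ncard
      ≤ (Set.Iio M ∪ (S ∩ Set.Ici M ∩ Set.Iio X)).ncard :=
        Set.ncard_le_ncard hsub
          ((Set.finite_Iio M).union ((Set.finite_Iio X).subset fun _ h => h.2))
    _ ≤ (Set.Iio M).ncard + (S ∩ Set.Ici M ∩ Set.Iio X).ncard := Set.ncard_union_le _ _
    _ = M + ((· / d) '' (S ∩ Set.Ici M ∩ Set.Iio X)).ncard := by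
        rw [Set.ncard_Iio_nat, (hinj.mono Set.inter_subset_left).ncard_image]
    _ ≤ M + (X / d + 1) := by
        grw [Set.ncard_le_ncard himage (Set.finite_Iic _), Set.ncard_Iic_nat]

theorem densityZero_of_frequently_injOn_div {S : Set ℕ}
    (h : ∃ᶠ d in atTop, ∃ M, Set.InjOn (· / d) (S ∩ Set.Ici M)) : densityZero S := by
  refine tendsto_order.2 ⟨fun a ha => Eventually.of_forall fun X => ha.trans_le (by positivity),
    fun ε hε => ?_⟩
  obtain ⟨d, ⟨M, hinj⟩, hd⟩ := (h.and_eventually (eventually_gt_atTop ⌈2 / ε⌉₊)).exists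
  have hdε : (d : ℝ)⁻¹ < ε / 2 := by
    have h2ε : 2 / ε < d := (Nat.le_ceil _).trans_lt (Nat.cast_lt.2 hd)
    rw [inv_lt_comm₀ (h2ε.trans' (by positivity)) (half_pos hε), inv_div]
    exact h2ε
  filter_upwards [(tendsto_const_div_atTop_nhds_zero_nat ((M + 1 : ℕ) : ℝ)).eventually_lt_const
    (half_pos hε), eventually_gt_atTop 0] with X hMX hX
  have hXpos : (0 : ℝ) < X := Nat.cast_pos.2 hX
  have hcard : (Nat.card ↥(S ∩ Set.Iio X) : ℝ) ≤ ((M + 1 : ℕ) : ℝ) + X / d := by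
    have hbound := (Nat.cast_le (α := ℝ)).2 (card_inter_Iio_le_of_injOn_div hinj X)
    have hdiv : ((X / d : ℕ) : ℝ) ≤ X / d := Nat.cast_div_le
    push_cast at hbound ⊢
    linarith
  calc (Nat.card ↥(S ∩ Set.Iio X) : ℝ) / X ≤ ((M + 1 : ℕ) : ℝ) / X + (d : ℝ)⁻¹ := by
        grw [hcard, add_div, div_div_cancel_left' hXpos.ne']
    _ < ε / 2 + ε / 2 := add_lt_add hMX hdε
    _ = ε := add_halves ε

def trapSet (N : ℕ → ℕ) : Set ℕ :=
  {n | ∃ k, N k ≤ n ∧ n < N (k + 1) ∧ n ≡ k [MOD 2 ^ Nat.log 2 k]}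

section trapSet

variable {N : ℕ → ℕ}

lemma le_of_apply_le_of_lt_apply_succ (hN : Monotone N) {n j k : ℕ} (hj : N j ≤ n)
    (hk : n < N (k + 1)) : j ≤ k := by
  by_contra! h
  exact (hN h).not_gt (hj.trans_lt hk)

lemma div_two_pow_lt_div_two_pow_of_lt (hN : Monotone N) (hdvd : ∀ k, 2 ^ k ∣ N k)
    {n n' k k' i : ℕ} (hi : i ≤ k + 1) (hn : n < N (k + 1)) (hn' : N k' ≤ n') (hkk' : k < k') :
    n / 2 ^ i < n' / 2 ^ i :=
  (Nat.div_lt_div_of_lt_of_dvd ((pow_dvd_pow 2 hi).trans (hdvd _)) hn).trans_le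
    (Nat.div_le_div_right ((hN hkk').trans hn'))

lemma injOn_div_trapSet (hN : Monotone N) (hdvd : ∀ k, 2 ^ k ∣ N k) (i : ℕ) :
    Set.InjOn (· / 2 ^ i) (trapSet N ∩ Set.Ici (N (2 ^ i))) := by
  rintro n ⟨⟨k, hkn, hnk, hmod⟩, hn⟩ n' ⟨⟨k', hkn', hnk', hmod'⟩, hn'⟩
    (hdiv : n / 2 ^ i = n' / 2 ^ i)
  have hik := le_of_apply_le_of_lt_apply_succ hN hn hnk
  have hik' := le_of_apply_le_of_lt_apply_succ hN hn' hnk'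
  have hi : i ≤ k := Nat.lt_two_pow_self.le.trans hik
  have hi' : i ≤ k' := Nat.lt_two_pow_self.le.trans hik'
  obtain rfl : k = k' := by
    rcases lt_trichotomy k k' with hlt | heq | hgt
    · exact absurd hdiv (div_two_pow_lt_div_two_pow_of_lt hN hdvd (by omega) hnk hkn' hlt).ne
    · exact heq
    · exact absurd hdiv (div_two_pow_lt_div_two_pow_of_lt hN hdvd (by omega) hnk' hkn hgt).ne'
  have hdvd_log : 2 ^ i ∣ 2 ^ Nat.log 2 k := pow_dvd_pow 2 (Nat.le_log_of_pow_le one_lt_two hik)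
  have hmod_eq : n % 2 ^ i = n' % 2 ^ i :=
    (hmod.of_dvd hdvd_log).trans (hmod'.of_dvd hdvd_log).symm
  rw [← Nat.div_add_mod n (2 ^ i), ← Nat.div_add_mod n' (2 ^ i), hdiv, hmod_eq]

theorem densityZero_trapSet (hN : Monotone N) (hdvd : ∀ k, 2 ^ k ∣ N k) :
    densityZero (trapSet N) :=
  densityZero_of_frequently_injOn_div <| frequently_atTop.2 fun i =>
    ⟨2 ^ i, Nat.lt_two_pow_self.le, N (2 ^ i), injOn_div_trapSet hN hdvd i⟩

end trapSet

lemma exists_infinite_mod_eq {A : Set ℕ} (hA : A.Infinite) {m : ℕ} (hm : 0 < m) :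
    ∃ r < m, {a ∈ A | a % m = r}.Infinite := by
  by_contra! h
  refine hA (((Set.finite_lt_nat m).biUnion h).subset fun a ha => ?_)
  exact Set.mem_biUnion (Nat.mod_lt a hm) ⟨ha, rfl⟩

lemma exists_bound_forall_exists_mem (S : ℕ → Set ℕ) (hS : ∀ j, (S j).Infinite) :
    ∃ g : ℕ → ℕ, ∀ j n, j ≤ n → ∃ a ∈ S j, n ≤ a ∧ a ≤ g n := by
  choose a ha hlt using fun j n => (hS j).exists_gt n
  exact ⟨fun n => (Finset.range (n + 1)).sup (a · n), fun j n hjn => ⟨a j n, ha j n, (hlt j n).le,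
    Finset.le_sup (f := (a · n)) (Finset.mem_range.2 (Nat.lt_succ_of_le hjn))⟩⟩

theorem exists_forall_infinite_inter_trapSet {A : Set ℕ} (hA : A.Infinite) :
    ∃ g : ℕ → ℕ, ∀ N : ℕ → ℕ, (∀ k, k ≤ N k) → (∀ᶠ k in atTop, g (N k) < N (k + 1)) →
      (A ∩ trapSet N).Infinite := by
  choose r hr hinf using fun i => exists_infinite_mod_eq hA (pow_pos two_pos i)
  obtain ⟨g, hg⟩ := exists_bound_forall_exists_mem _ hinf
  refine ⟨g, fun N hN hgN => Set.infinite_of_forall_exists_gt fun m => ?_⟩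
  obtain ⟨k₀, hk₀⟩ := eventually_atTop.1 hgN
  set i := max m k₀ + 1
  set k := 2 ^ i + r i
  have hik : i < k := Nat.lt_two_pow_self.trans_le (Nat.le_add_right _ _)
  have hlog : Nat.log 2 k = i :=
    Nat.log_eq_of_pow_le_of_lt_pow (Nat.le_add_right _ _) (by rw [pow_succ]; have := hr i; omega)
  obtain ⟨a, ⟨haA, hamod⟩, hNa, hag⟩ := hg i (N k) (hik.le.trans (hN k))
  refine ⟨a, ⟨haA, k, hNa, hag.trans_lt (hk₀ k (by omega)), ?_⟩,
    (Nat.lt_succ_of_le (le_max_left m k₀)).trans (hik.trans_le ((hN k).trans hNa))⟩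
  rw [hlog, Nat.ModEq, hamod, Nat.add_mod_left, Nat.mod_eq_of_lt (hr i)]

def fastSeq (f : ℕ → ℕ) : ℕ → ℕ
  | 0 => 1
  | k + 1 => 2 ^ (k + 1) * (f (fastSeq f k) + fastSeq f k + 1)

section fastSeq

variable (f : ℕ → ℕ)

lemma pow_dvd_fastSeq (k : ℕ) : 2 ^ k ∣ fastSeq f k := by
  cases k with
  | zero => exact one_dvd _
  | succ k => exact dvd_mul_right _ _

lemma add_lt_fastSeq_succ (k : ℕ) : f (fastSeq f k) + fastSeq f k < fastSeq f (k + 1) :=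
  (Nat.lt_succ_self _).trans_le (Nat.le_mul_of_pos_left _ (by positivity))

lemma strictMono_fastSeq : StrictMono (fastSeq f) :=
  strictMono_nat_of_lt_succ fun k => (Nat.le_add_left _ _).trans_lt (add_lt_fastSeq_succ f k)

end fastSeq

/-- `cov*(𝒵₀) ≤ 𝔡`: there is a family of density-zero sets of cardinality
at most `𝔡` such that every infinite subset of `ω` meets some member in an infinite set. -/
theorem stmt_3 : ∃ F : Set (Set ℕ),
    (∀ A ∈ F, densityZero A) ∧
    #↥F ≤ dominatingNumber ∧
    ∀ A : Set ℕ, A.Infinite → ∃ B ∈ F, (A ∩ B).Infinite := by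
  obtain ⟨D, hDcard, hDdom⟩ : dominatingNumber ∈ {c | ∃ F : Set (ℕ → ℕ), #↥F = c ∧
      ∀ g : ℕ → ℕ, ∃ f ∈ F, ∀ᶠ n in atTop, g n ≤ f n} :=
    csInf_mem ⟨_, Set.univ, rfl, fun g =>
      ⟨g, Set.mem_univ g, Eventually.of_forall fun _ => le_rfl⟩⟩
  refine ⟨(fun f => trapSet (fastSeq f)) '' D, ?_, mk_image_le.trans hDcard.le, fun A hA => ?_⟩
  · rintro _ ⟨f, -, rfl⟩
    exact densityZero_trapSet (strictMono_fastSeq f).monotone (pow_dvd_fastSeq f)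
  obtain ⟨g, hg⟩ := exists_forall_infinite_inter_trapSet hA
  obtain ⟨f, hfD, hgf⟩ := hDdom g
  refine ⟨_, ⟨f, hfD, rfl⟩, hg _ (strictMono_fastSeq f).id_le ?_⟩
  filter_upwards [(strictMono_fastSeq f).tendsto_atTop.eventually hgf] with k hk
  exact hk.trans_lt ((Nat.le_add_right _ _).trans_lt (add_lt_fastSeq_succ f k))
end

section
/- Let κ > ω be a regular cardinal. If 𝔰_κ > κ, then κ satisfies the partition relation κ → (κ)²₂ (hence κ is weakly compact). -/
/-!
The `κ` sets `{y | c x y = 0}` do not form a splitting family, so some `b` of size `κ` is split by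
none of them: every `x` gives one colour `i x` to all but fewer than `κ` points of `b`. Some colour
`j` is the value of `i` on `κ` points of `b`. Using regularity, choose recursively an increasing
`κ`-sequence of such points, each avoiding the fewer than `κ` exceptional points of all earlier
terms; its range is homogeneous of colour `j`.
-/

open Cardinal

/-- `a` splits `b` (as subsets of a set of order type `κ.ord`). -/
def Splits (κ : Cardinal) (a b : Set κ.ord.ToType) : Prop :=
  #↥(b ∩ a) = κ ∧ #↥(b \ a) = κ

/-- The splitting number `𝔰_κ`. -/
noncomputable def splittingNumber (κ : Cardinal) : Cardinal :=
  sInf {c | ∃ F : Set (Set κ.ord.ToType), #↥F = c ∧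
    ∀ b : Set κ.ord.ToType, #↥b = κ → ∃ a ∈ F, Splits κ a b}

open Set

theorem exists_not_splits_of_mk_lt_splittingNumber {κ : Cardinal} (F : Set (Set κ.ord.ToType))
    (hF : #F < splittingNumber κ) : ∃ b : Set κ.ord.ToType, #b = κ ∧ ∀ a ∈ F, ¬Splits κ a b := by
  by_contra! h
  exact (csInf_le' ⟨F, rfl, h⟩ : splittingNumber κ ≤ #F).not_gt hF

theorem mk_inter_lt_or_mk_diff_lt_of_not_splits {κ : Cardinal} {a b : Set κ.ord.ToType}
    (hb : #b = κ) (h : ¬Splits κ a b) : #↥(b ∩ a) < κ ∨ #↥(b \ a) < κ := by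
  have hinter : #↥(b ∩ a) ≤ κ := (mk_le_mk_of_subset inter_subset_left).trans_eq hb
  have hdiff : #↥(b \ a) ≤ κ := (mk_le_mk_of_subset sdiff_subset).trans_eq hb
  by_contra! hge
  exact h ⟨hinter.antisymm hge.1, hdiff.antisymm hge.2⟩

theorem exists_mk_fiber_eq_of_fin_two {α : Type u} {κ : Cardinal.{u}} (hκ : ℵ₀ ≤ κ)
    {b : Set α} (hb : #b = κ) (g : α → Fin 2) : ∃ j, #{y | y ∈ b ∧ g y = j} = κ := by
  by_contra! hne
  have hlt (j : Fin 2) : #{y | y ∈ b ∧ g y = j} < κ :=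
    ((mk_le_mk_of_subset fun _ hy ↦ hy.1).trans_eq hb).lt_of_ne (hne j)
  have hcover : b ⊆ {y | y ∈ b ∧ g y = 0} ∪ {y | y ∈ b ∧ g y = 1} := fun y hy ↦
    (show g y = 0 ∨ g y = 1 by omega).imp (⟨hy, ·⟩) (⟨hy, ·⟩)
  refine (hb ▸ mk_le_mk_of_subset hcover).not_gt ?_
  exact (mk_union_le _ _).trans_lt (add_lt_of_lt hκ (hlt 0) (hlt 1))

theorem exists_strictMono_forall_lt_not_mem {T : Type u} [LinearOrder T] [WellFoundedLT T]
    {κ : Cardinal.{u}} (hreg : κ.IsRegular) (hIio : ∀ x : T, #(Iio x) < κ)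
    {b : Set T} (hb : #b = κ) (S : T → Set T) (hS : ∀ z, #(S z) < κ) :
    ∃ f : T → T, (∀ x, f x ∈ b) ∧ StrictMono f ∧ ∀ ⦃y x⦄, y < x → f x ∉ S (f y) := by
  have hIic (z : T) : #(Iic z) < κ := by
    rw [← Iio_insert]
    exact mk_insert_le.trans_lt
      (add_lt_of_lt hreg.aleph0_le (hIio z) (one_lt_aleph0.trans_le hreg.aleph0_le))
  have hnext (x : T) (g : ∀ y, y < x → T) :
      (b \ ⋃ y : Iio x, (S (g y y.2) ∪ Iic (g y y.2))).Nonempty := by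
    refine sdiff_nonempty_of_mk_lt_mk (hb ▸ ?_)
    rw [card_iUnion_lt_iff_forall_of_isRegular hreg (hIio x)]
    exact fun y ↦ (mk_union_le _ _).trans_lt (add_lt_of_lt hreg.aleph0_le (hS _) (hIic _))
  let f : T → T := IsWellFounded.fix (· < ·) fun x g ↦ (hnext x g).some
  have hf (x : T) : f x ∈ b \ ⋃ y : Iio x, (S (f y) ∪ Iic (f y)) := by
    rw [show f x = _ from IsWellFounded.fix_eq (· < ·) _ x]
    exact (hnext x fun y _ ↦ f y).some_mem
  have hfresh ⦃y x : T⦄ (hyx : y < x) : f x ∉ S (f y) ∪ Iic (f y) :=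
    fun hmem ↦ (hf x).2 (mem_iUnion.2 ⟨⟨y, hyx⟩, hmem⟩)
  refine ⟨f, fun x ↦ (hf x).1, fun y x hyx ↦ ?_, fun y x hyx ↦ ?_⟩
  · exact not_le.1 fun hle ↦ hfresh hyx (Or.inr hle)
  · exact fun hmem ↦ hfresh hyx (Or.inl hmem)

/-- Take `b` split by none of the at most `κ` sets `{y | c x y = 0}`. -/
theorem exists_almost_monochromatic {κ : Cardinal} (hs : κ < splittingNumber κ)
    (c : κ.ord.ToType → κ.ord.ToType → Fin 2) :
    ∃ b : Set κ.ord.ToType, #b = κ ∧ ∀ x, ∃ j, #{y | y ∈ b ∧ c x y ≠ j} < κ := by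
  let A (x : κ.ord.ToType) : Set κ.ord.ToType := {y | c x y = 0}
  have hA : #(range A) < splittingNumber κ := (mk_range_le.trans_eq (mk_ord_toType κ)).trans_lt hs
  obtain ⟨b, hb, hunsplit⟩ := exists_not_splits_of_mk_lt_splittingNumber _ hA
  refine ⟨b, hb, fun x ↦ ?_⟩
  have hne_one (j : Fin 2) : j ≠ 1 ↔ j = 0 := by fin_cases j <;> decide
  rcases mk_inter_lt_or_mk_diff_lt_of_not_splits hb (hunsplit (A x) ⟨x, rfl⟩) with h | h
  · have hset : {y | y ∈ b ∧ c x y ≠ 1} = b ∩ A x := by ext y; simp [A, hne_one]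
    exact ⟨1, hset ▸ h⟩
  · exact ⟨0, h⟩

theorem stmt_4_general (κ : Cardinal) (hreg : κ.IsRegular)
    (hs : κ < splittingNumber κ) :
    ∀ c : κ.ord.ToType → κ.ord.ToType → Fin 2,
      ∃ H : Set κ.ord.ToType, #↥H = κ ∧
        ∃ i : Fin 2, ∀ x ∈ H, ∀ y ∈ H, x < y → c x y = i := by
  intro c
  obtain ⟨b, hb, hcolor⟩ := exists_almost_monochromatic hs c
  choose i hi using hcolor
  obtain ⟨j, hj⟩ := exists_mk_fiber_eq_of_fin_two hreg.aleph0_le hb i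
  obtain ⟨f, hfj, hmono, hfree⟩ := exists_strictMono_forall_lt_not_mem hreg
    (fun x ↦ by simpa using mk_Iio_lt x) hj (fun z ↦ {y | y ∈ b ∧ c z y ≠ i z}) hi
  refine ⟨range f, by rw [mk_range_eq f hmono.injective, mk_ord_toType], j, ?_⟩
  rintro _ ⟨x, rfl⟩ _ ⟨y, rfl⟩ hxy
  rw [← (hfj x).2]
  by_contra hne
  exact hfree (hmono.lt_iff_lt.1 hxy) ⟨(hfj y).1, hne⟩

/-- Suzuki: if `κ > ω` is regular and `𝔰_κ > κ`, then `κ → (κ)²₂`: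
every 2-coloring of pairs from `κ` has a homogeneous set of size `κ`. -/
theorem stmt_4 (κ : Cardinal) (hreg : κ.IsRegular) (hκ : ℵ₀ < κ)
    (hs : κ < splittingNumber κ) :
    ∀ c : κ.ord.ToType → κ.ord.ToType → Fin 2,
      ∃ H : Set κ.ord.ToType, #↥H = κ ∧
        ∃ i : Fin 2, ∀ x ∈ H, ∀ y ∈ H, x < y → c x y = i :=
  stmt_4_general κ hreg hs
end

section
/- Let κ > ω be regular, M ≺ H(θ) with λ ⊆ M for some λ with κ < λ < 𝔰_κ, and D = {x ⊆ κ : A* ⊆* x} for an A* ∈ [κ]^κ unsplit by M ∩ P(κ). Define on L = {[f]_D : f ∈ M ∩ κ^κ} the relation [f]_D <_D [g]_D iff {α : f(α) < g(α)} ∈ D. Then (L, <_D) is a linear order, and the set {[c_α]_D : α < κ} of classes of constant functions has a least upper bound in L. -/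
/-!
Since `A` is unsplit by `MS` and every comparison set of two functions of `MF` lies in `MS`,
`A` is almost contained in exactly one of `{f < g}`, `{f = g}`, `{g < f}`; this gives the
linear order. For the least upper bound, `id` bounds all constants, and `<_D` is well-founded
on `κ^κ` because `κ` has uncountable cofinality, so a `<_D`-minimal upper bound in `MF` exists.
-/

open Cardinal Set

namespace Cardinal

universe u

variable {ι : Type u} {κ : Cardinal.{u}}

theorem mk_union_lt (hκ : ℵ₀ ≤ κ) {s t : Set ι} (hs : #s < κ) (ht : #t < κ) :
    #↥(s ∪ t) < κ :=
  (mk_union_le s t).trans_lt (add_lt_of_lt hκ hs ht)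

theorem mk_iUnion_nat_lt (hreg : κ.IsRegular) (hκ : ℵ₀ < κ) {s : ℕ → Set ι}
    (hs : ∀ n, #(s n) < κ) : #↥(⋃ n, s n) < κ := by
  rw [← lift_uzero #↥(⋃ n, s n)]
  exact mk_iUnion_le_sum_mk_lift.trans_lt
    (sum_lt_lift_of_isRegular hreg (by simpa using hκ) hs)

theorem mk_Iic_toType_ord_lt (hκ : ℵ₀ ≤ κ) (a : κ.ord.ToType) : #(Iic a) < κ := by
  rw [← Iio_insert]
  exact mk_insert_le.trans_lt
    (add_lt_of_lt hκ (by simpa using mk_Iio_lt a) (one_lt_aleph0.trans_le hκ))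

theorem not_diff_lt_and_diff_lt_of_disjoint (hκ : ℵ₀ ≤ κ) {A s t : Set ι} (hA : ¬#A < κ)
    (hst : Disjoint s t) : ¬(#↥(A \ s) < κ ∧ #↥(A \ t) < κ) := by
  rintro ⟨hs, ht⟩
  have hcover : A ⊆ (A \ s) ∪ (A \ t) := fun x hx =>
    (not_and_or.1 fun h => disjoint_left.1 hst h.1 h.2).imp (⟨hx, ·⟩) (⟨hx, ·⟩)
  exact hA ((mk_le_mk_of_subset hcover).trans_lt (mk_union_lt hκ hs ht))

theorem diff_lt_or_of_subset_union₃ (hκ : ℵ₀ ≤ κ) {A s t u : Set ι} (hA : ¬#A < κ)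
    (hcover : A ⊆ s ∪ t ∪ u) (hs : #↥(A \ s) < κ ∨ #↥(A ∩ s) < κ)
    (ht : #↥(A \ t) < κ ∨ #↥(A ∩ t) < κ) (hu : #↥(A \ u) < κ ∨ #↥(A ∩ u) < κ) :
    #↥(A \ s) < κ ∨ #↥(A \ t) < κ ∨ #↥(A \ u) < κ := by
  refine hs.imp_right fun hs => ht.imp_right fun ht => hu.resolve_right fun hu => hA ?_
  have hsplit : A ⊆ (A ∩ s) ∪ (A ∩ t) ∪ (A ∩ u) := by
    rw [← inter_union_distrib_left, ← inter_union_distrib_left]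
    exact subset_inter subset_rfl hcover
  exact (mk_le_mk_of_subset hsplit).trans_lt
    (mk_union_lt hκ (mk_union_lt hκ hs ht) hu)

/-- Along a descending sequence the countably many exceptional sets have union of size `< κ`,
so some point of `A` would carry a descending chain in `α`. -/
theorem wellFounded_diff_lt {α : Type*} [Preorder α] [WellFoundedLT α] (hreg : κ.IsRegular)
    (hκ : ℵ₀ < κ) {A : Set ι} (hA : ¬#A < κ) :
    WellFounded fun g f : ι → α => #↥(A \ {x | g x < f x}) < κ := by
  refine wellFounded_iff_isEmpty_descending_chain.2 ⟨fun ⟨f, hf⟩ => ?_⟩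
  obtain ⟨x, hxA, hx⟩ := not_subset.1 fun hsub =>
    hA ((mk_le_mk_of_subset hsub).trans_lt (mk_iUnion_nat_lt hreg hκ hf))
  refine not_strictAnti_of_wellFoundedLT (fun n => f n x) (strictAnti_nat_of_succ_lt fun n => ?_)
  by_contra hn
  exact hx (mem_iUnion.2 ⟨n, hxA, hn⟩)

end Cardinal

theorem stmt_6_general (κ : Cardinal) (hreg : κ.IsRegular) (hκ : ℵ₀ < κ)
    (MS : Set (Set κ.ord.ToType)) (MF : Set (κ.ord.ToType → κ.ord.ToType))
    -- elementarity: comparison sets of functions in `M` belong to `M`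
    (hcmp : ∀ f ∈ MF, ∀ g ∈ MF,
      {α | f α = g α} ∈ MS ∧ {α | f α < g α} ∈ MS)
    (hid : id ∈ MF)
    -- `A*` is unsplit by `M ∩ 𝒫(κ)`
    (A : Set κ.ord.ToType) (hA : #↥A = κ)
    (hunsplit : ∀ x ∈ MS, #↥(A \ x) < κ ∨ #↥(A ∩ x) < κ) :
    -- `<_D` is a linear order on the classes: trichotomy and mutual exclusivity
    (∀ f ∈ MF, ∀ g ∈ MF,
      (#↥(A \ {α | f α < g α}) < κ ∨ #↥(A \ {α | f α = g α}) < κ ∨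
        #↥(A \ {α | g α < f α}) < κ) ∧
      ¬(#↥(A \ {α | f α < g α}) < κ ∧ #↥(A \ {α | f α = g α}) < κ) ∧
      ¬(#↥(A \ {α | f α < g α}) < κ ∧ #↥(A \ {α | g α < f α}) < κ) ∧
      ¬(#↥(A \ {α | f α = g α}) < κ ∧ #↥(A \ {α | g α < f α}) < κ)) ∧
    -- the constant functions have a least upper bound in `L`
    (∃ f ∈ MF,
      (∀ a : κ.ord.ToType, #↥(A \ {β | a < f β}) < κ) ∧
      ∀ g ∈ MF, (∀ a : κ.ord.ToType, #↥(A \ {β | a < g β}) < κ) →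
        ¬ #↥(A \ {β | g β < f β}) < κ) := by
  have hAκ : ¬#A < κ := hA.not_lt
  refine ⟨fun f hf g hg => ⟨?_, ?_, ?_, ?_⟩, ?_⟩
  · refine diff_lt_or_of_subset_union₃ hκ.le hAκ (fun x _ => ?_)
      (hunsplit _ (hcmp f hf g hg).2) (hunsplit _ (hcmp f hf g hg).1)
      (hunsplit _ (hcmp g hg f hf).2)
    rcases lt_trichotomy (f x) (g x) with h | h | h
    exacts [Or.inl (Or.inl h), Or.inl (Or.inr h), Or.inr h]
  · exact not_diff_lt_and_diff_lt_of_disjoint hκ.le hAκ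
      (disjoint_left.2 fun _ hlt heq => (ne_of_lt hlt) heq)
  · exact not_diff_lt_and_diff_lt_of_disjoint hκ.le hAκ
      (disjoint_left.2 fun x (hlt : f x < g x) hgt => lt_asymm hlt hgt)
  · exact not_diff_lt_and_diff_lt_of_disjoint hκ.le hAκ
      (disjoint_left.2 fun _ heq hgt => (ne_of_lt hgt) (Eq.symm heq))
  · have hid_ub (a : κ.ord.ToType) : #↥(A \ {β | a < id β}) < κ := by
      refine (mk_le_mk_of_subset fun β hβ => ?_).trans_lt (mk_Iic_toType_ord_lt hκ.le a)
      exact not_lt.1 (show ¬a < β from hβ.2)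
    obtain ⟨f, ⟨hfM, hf_ub⟩, hf_min⟩ := (wellFounded_diff_lt hreg hκ hAκ).has_min
      {f | f ∈ MF ∧ ∀ a : κ.ord.ToType, #↥(A \ {β | a < f β}) < κ} ⟨id, hid, hid_ub⟩
    exact ⟨f, hfM, hf_ub, fun g hg hg_ub => hf_min g ⟨hg, hg_ub⟩⟩

/-- with `κ` regular uncountable, `M ≺ H(θ)` modelled by its traces
`MS = M ∩ 𝒫(κ)` and `MF = M ∩ κ^κ` (with the closure properties provided by
elementarity), and `A* ∈ [κ]^κ` unsplit by `MS`, let `D = {x : A* ⊆* x}`.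
Then `<_D` linearly orders `L = (M ∩ κ^κ)/∼_D`, and the classes of the constant
functions have a least upper bound in `L`. -/
theorem stmt_6 (κ : Cardinal) (hreg : κ.IsRegular) (hκ : ℵ₀ < κ)
    (MS : Set (Set κ.ord.ToType)) (MF : Set (κ.ord.ToType → κ.ord.ToType))
    -- elementarity: comparison sets of functions in `M` belong to `M`
    (hcmp : ∀ f ∈ MF, ∀ g ∈ MF,
      {α | f α = g α} ∈ MS ∧ {α | f α < g α} ∈ MS)
    -- `κ ⊆ M`, so all constant functions, and the identity, are in `M`
    (hconst : ∀ a : κ.ord.ToType, (fun _ => a) ∈ MF)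
    (hid : id ∈ MF)
    -- `A*` is unsplit by `M ∩ 𝒫(κ)`
    (A : Set κ.ord.ToType) (hA : #↥A = κ)
    (hunsplit : ∀ x ∈ MS, #↥(A \ x) < κ ∨ #↥(A ∩ x) < κ) :
    -- `<_D` is a linear order on the classes: trichotomy and mutual exclusivity
    (∀ f ∈ MF, ∀ g ∈ MF,
      (#↥(A \ {α | f α < g α}) < κ ∨ #↥(A \ {α | f α = g α}) < κ ∨
        #↥(A \ {α | g α < f α}) < κ) ∧
      ¬(#↥(A \ {α | f α < g α}) < κ ∧ #↥(A \ {α | f α = g α}) < κ) ∧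
      ¬(#↥(A \ {α | f α < g α}) < κ ∧ #↥(A \ {α | g α < f α}) < κ) ∧
      ¬(#↥(A \ {α | f α = g α}) < κ ∧ #↥(A \ {α | g α < f α}) < κ)) ∧
    -- the constant functions have a least upper bound in `L`
    (∃ f ∈ MF,
      (∀ a : κ.ord.ToType, #↥(A \ {β | a < f β}) < κ) ∧
      ∀ g ∈ MF, (∀ a : κ.ord.ToType, #↥(A \ {β | a < g β}) < κ) →
        ¬ #↥(A \ {β | g β < f β}) < κ) :=
  stmt_6_general κ hreg hκ MS MF hcmp hid A hA hunsplit
end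

section
/- With κ, M, D as above, let f* ∈ M ∩ κ^κ be such that [f*]_D is a least upper bound of the classes of constant functions {[c_α]_D : α < κ}. Then for every club C ⊆ κ with C ∈ M, the preimage f*^{-1}(C) belongs to D. -/
/-! Since `A*` is unsplit by `M`, either `f*⁻¹(C)` or its complement is in `D`. In the second
case `g(α) = sup (C ∩ f*(α))` is a function in `M` which, because `C` is unbounded, still lies
above every constant modulo `D`, and which, because `C` is closed, lies strictly below `f*`
wherever `f*(α) ∉ C` is above a fixed element of `C`, i.e. `D`-almost everywhere.
This contradicts the leastness of `[f*]_D`. -/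

open Cardinal

/-- A club in `κ` (as a subset of a type of order type `κ.ord`): unbounded and closed
under suprema of its nonempty subsets. -/
def IsClubSet {K : Type*} [LinearOrder K] (C : Set K) : Prop :=
  (∀ a : K, ∃ b ∈ C, a < b) ∧
  (∀ s : Set K, s ⊆ C → s.Nonempty → ∀ a : K, IsLUB s a → a ∈ C)

open Set

theorem IsClubSet.isLUB_inter_Iio_lt {K : Type*} [LinearOrder K] {C : Set K}
    (hC : IsClubSet C) {x y : K} (hx : x ∉ C) (hne : (C ∩ Iio x).Nonempty)
    (hy : IsLUB (C ∩ Iio x) y) : y < x :=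
  (hy.2 fun _ hz => hz.2.le).lt_of_ne fun h => hx (h ▸ hC.2 _ inter_subset_left hne y hy)

section SmallModulo

variable {α : Type*} {κ : Cardinal} {A x y : Set α}

theorem mk_diff_lt_of_subset (hxy : x ⊆ y) (hx : #↥(A \ x) < κ) : #↥(A \ y) < κ :=
  (mk_le_mk_of_subset (sdiff_subset_sdiff_right hxy)).trans_lt hx

theorem mk_diff_inter_lt (hκ : ℵ₀ ≤ κ) (hx : #↥(A \ x) < κ) (hy : #↥(A \ y) < κ) :
    #↥(A \ (x ∩ y)) < κ := by
  rw [sdiff_inter]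
  exact (mk_union_le _ _).trans_lt (add_lt_of_lt hκ hx hy)

end SmallModulo

/- `C ∈ M` is modelled by two consequences of elementarity: `f*⁻¹(C) ∈ M`, and `M`
contains a function computing `sup (C ∩ f*(α))`. -/
theorem stmt_7_general (κ : Cardinal) (hκ : ℵ₀ < κ)
    (MS : Set (Set κ.ord.ToType)) (MF : Set (κ.ord.ToType → κ.ord.ToType))
    (A : Set κ.ord.ToType)
    (hunsplit : ∀ x ∈ MS, #↥(A \ x) < κ ∨ #↥(A ∩ x) < κ)
    -- `f* ∈ M ∩ κ^κ` is a least upper bound of the constant functions modulo `D`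
    (fs : κ.ord.ToType → κ.ord.ToType)
    (hub : ∀ a : κ.ord.ToType, #↥(A \ {β | a < fs β}) < κ)
    (hlub : ∀ g ∈ MF, (∀ a : κ.ord.ToType, #↥(A \ {β | a < g β}) < κ) →
      ¬ #↥(A \ {β | g β < fs β}) < κ)
    -- `C ∈ M` is a club in `κ`
    (C : Set κ.ord.ToType) (hC : IsClubSet C)
    (hCM : {α | fs α ∈ C} ∈ MS)
    (hsup : ∃ g ∈ MF, ∀ α : κ.ord.ToType,
      (C ∩ Set.Iio (fs α)).Nonempty → IsLUB (C ∩ Set.Iio (fs α)) (g α)) :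
    #↥(A \ {α | fs α ∈ C}) < κ := by
  refine (hunsplit _ hCM).resolve_right fun hsmall => ?_
  obtain ⟨g, hg, hgsup⟩ := hsup
  have := nonempty_ord_toType (aleph0_pos.trans hκ).ne'
  obtain ⟨c₀, hc₀, -⟩ := hC.1 (Classical.arbitrary _)
  have hgub : ∀ a, #↥(A \ {β | a < g β}) < κ := fun a => by
    obtain ⟨c, hc, hac⟩ := hC.1 a
    exact mk_diff_lt_of_subset
      (fun β hβ => hac.trans_le ((hgsup β ⟨c, hc, hβ⟩).1 ⟨hc, hβ⟩)) (hub c)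
  refine hlub g hg hgub (mk_diff_lt_of_subset ?_
    (mk_diff_inter_lt hκ.le (hub c₀) (y := {α | fs α ∈ C}ᶜ) (by rwa [sdiff_compl])))
  rintro β ⟨hc₀β, hβ⟩
  exact hC.isLUB_inter_Iio_lt hβ ⟨c₀, hc₀, hc₀β⟩ (hgsup β ⟨c₀, hc₀, hc₀β⟩)

/-- with `κ`, `M` (traces `MS`, `MF`), `A*`, `D = {x : A* ⊆* x}` as before,
let `f* ∈ M ∩ κ^κ` represent a least upper bound of the classes of the constant
functions.  Then for every club `C ⊆ κ` with `C ∈ M`, `f*⁻¹(C) ∈ D`.  (Membership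
`C ∈ M` is modelled by the two instances of elementarity it provides: `f*⁻¹(C) ∈ MS`,
and `M` contains a function computing `sup(C ∩ f*(α))`.) -/
theorem stmt_7 (κ : Cardinal) (hreg : κ.IsRegular) (hκ : ℵ₀ < κ)
    (MS : Set (Set κ.ord.ToType)) (MF : Set (κ.ord.ToType → κ.ord.ToType))
    (hcmp : ∀ f ∈ MF, ∀ g ∈ MF,
      {α | f α = g α} ∈ MS ∧ {α | f α < g α} ∈ MS)
    (hconst : ∀ a : κ.ord.ToType, (fun _ => a) ∈ MF)
    (hid : id ∈ MF)
    (A : Set κ.ord.ToType) (hA : #↥A = κ)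
    (hunsplit : ∀ x ∈ MS, #↥(A \ x) < κ ∨ #↥(A ∩ x) < κ)
    -- `f* ∈ M ∩ κ^κ` is a least upper bound of the constant functions modulo `D`
    (fs : κ.ord.ToType → κ.ord.ToType) (hfs : fs ∈ MF)
    (hub : ∀ a : κ.ord.ToType, #↥(A \ {β | a < fs β}) < κ)
    (hlub : ∀ g ∈ MF, (∀ a : κ.ord.ToType, #↥(A \ {β | a < g β}) < κ) →
      ¬ #↥(A \ {β | g β < fs β}) < κ)
    -- `C ∈ M` is a club in `κ`
    (C : Set κ.ord.ToType) (hC : IsClubSet C)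
    (hCM : {α | fs α ∈ C} ∈ MS)
    (hsup : ∃ g ∈ MF, ∀ α : κ.ord.ToType,
      (C ∩ Set.Iio (fs α)).Nonempty → IsLUB (C ∩ Set.Iio (fs α)) (g α)) :
    #↥(A \ {α | fs α ∈ C}) < κ :=
  stmt_7_general κ hκ MS MF A hunsplit fs hub hlub C hC hCM hsup
end

section
/- Let J and Ā be as in the definition of F_{J,Ā}. There exists a sequence (f_α)_{α<ω₁} of functions in F_{J,Ā} such that for every triple (i, m, F) with m ≤ 2^i and F ∈ [ω₁]^m, there exists an infinite set B_{i,m,F} ⊆ ω \ i such that for all distinct α, β ∈ F and all n ∈ B_{i,m,F}, the binary sequences σ_{f_α,n,i} and σ_{f_β,n,i} are distinct. -/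
open Cardinal

/-!
Code each `α < ω₁` by a distinct point `x_α` of Cantor space. There are only countably many
probes `e : 2^N → 2^i`, so they can be scheduled along `ω` with each probe recurring infinitely
often. On the `n`-th interval, `f_α` follows through the tree partition the branch that the
`n`-th probe assigns to `x_α ↾ N`: `f_α k` is the length of the longest prefix of that branch
whose node contains `k`. Then `{k ∈ J_n | i ≤ f_α k}` is the node of the branch at length `i`,
and for `|F| ≤ 2^i` a probe that labels the restrictions of the `x_α`, `α ∈ F`, by distinct
`i`-bit strings is used on infinitely many intervals.
-/

structure IsTreePartition {α : Type*} (I : Set α) (L : ℕ) (A : List Bool → Set α) : Prop where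
  ncard_eq : I.ncard = 2 ^ L
  subset : ∀ σ : List Bool, σ.length ≤ L → A σ ⊆ I
  ncard_node : ∀ σ : List Bool, σ.length ≤ L → (A σ).ncard = 2 ^ (L - σ.length)
  disjoint : ∀ σ τ : List Bool, σ.length = τ.length → τ.length ≤ L → σ ≠ τ →
    Disjoint (A σ) (A τ)
  antitone : ∀ σ τ : List Bool, τ.length ≤ L → σ <+: τ → A τ ⊆ A σ

namespace IsTreePartition

variable {α : Type*} {I : Set α} {L : ℕ} {A : List Bool → Set α} {σ τ : List Bool}

lemma finite (hA : IsTreePartition I L A) (hσ : σ.length ≤ L) : (A σ).Finite :=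
  (Set.finite_of_ncard_ne_zero (by simp [hA.ncard_eq])).subset (hA.subset σ hσ)

lemma nonempty (hA : IsTreePartition I L A) (hσ : σ.length ≤ L) : (A σ).Nonempty :=
  Set.nonempty_of_ncard_ne_zero (by simp [hA.ncard_node σ hσ])

lemma nil_eq (hA : IsTreePartition I L A) : A [] = I :=
  Set.eq_of_subset_of_ncard_le (hA.subset [] (Nat.zero_le L))
    (by simp [hA.ncard_eq, hA.ncard_node [] (Nat.zero_le L)])
    (Set.finite_of_ncard_ne_zero (by simp [hA.ncard_eq]))

lemma ne_of_ne (hA : IsTreePartition I L A) (hlen : σ.length = τ.length) (hτ : τ.length ≤ L)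
    (hne : σ ≠ τ) : A σ ≠ A τ :=
  (hA.disjoint σ τ hlen hτ hne).ne (hA.nonempty (hlen ▸ hτ)).ne_empty

lemma diff_append (hA : IsTreePartition I L A) (hσ : σ.length < L) (b : Bool) :
    A σ \ A (σ ++ [b]) = A (σ ++ [!b]) := by
  have hb : (σ ++ [b]).length ≤ L := by simpa using hσ
  have hnb : (σ ++ [!b]).length ≤ L := by simpa using hσ
  have hsub : A (σ ++ [!b]) ⊆ A σ \ A (σ ++ [b]) := fun k hk =>
    ⟨hA.antitone σ _ hnb (List.prefix_append _ _) hk,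
      Set.disjoint_right.1 (hA.disjoint (σ ++ [b]) _ (by simp) hnb (by simp)) hk⟩
  refine (Set.eq_of_subset_of_ncard_le hsub ?_ ((hA.finite hσ.le).sdiff)).symm
  have hhalf : 2 ^ (L - σ.length) = 2 * 2 ^ (L - (σ.length + 1)) := by
    rw [← pow_succ']; congr 1; omega
  rw [Set.ncard_sdiff (hA.antitone σ _ hb (List.prefix_append _ _)) (hA.finite hb),
    hA.ncard_node σ hσ.le, hA.ncard_node _ hb, hA.ncard_node _ hnb, hhalf]
  simp only [List.length_append, List.length_singleton]
  omega

end IsTreePartition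

open Classical in
noncomputable def level {α : Type*} (A : List Bool → Set α) (L : ℕ) (b : ℕ → Bool) (k : α) :
    ℕ :=
  Nat.findGreatest (fun i => k ∈ A ((List.range i).map b)) L

section Level

variable {α : Type*} {I : Set α} {L : ℕ} {A : List Bool → Set α} {b : ℕ → Bool}

lemma level_le (k : α) : level A L b k ≤ L := by
  classical
  exact Nat.findGreatest_le L

lemma map_range_prefix {i i' : ℕ} (h : i ≤ i') :
    (List.range i).map b <+: (List.range i').map b := by
  rw [← Nat.min_eq_left h, ← List.take_range, List.map_take]
  exact List.take_prefix _ _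

namespace IsTreePartition

lemma le_level_iff (hA : IsTreePartition I L A) {k : α} (hk : k ∈ I) {i : ℕ} (hi : i ≤ L) :
    i ≤ level A L b k ↔ k ∈ A ((List.range i).map b) := by
  classical
  refine ⟨fun h => ?_, fun h => Nat.le_findGreatest hi h⟩
  have hmem : k ∈ A ((List.range (level A L b k)).map b) := by
    rcases Nat.eq_zero_or_pos (level A L b k) with h0 | hpos
    · simpa [h0, hA.nil_eq] using hk
    · exact Nat.findGreatest_of_ne_zero rfl hpos.ne'
  exact hA.antitone _ _ (by simpa using level_le k) (map_range_prefix h) hmem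

lemma sep_le_level (hA : IsTreePartition I L A) {i : ℕ} (hi : i ≤ L) :
    {k ∈ I | i ≤ level A L b k} = A ((List.range i).map b) := by
  ext k
  refine ⟨fun ⟨hk, h⟩ => (hA.le_level_iff hk hi).1 h, fun h => ?_⟩
  have hk := hA.subset _ (by simpa using hi) h
  exact ⟨hk, (hA.le_level_iff hk hi).2 h⟩

lemma sep_level_eq (hA : IsTreePartition I L A) {m : ℕ} (hm : m < L) :
    {k ∈ I | level A L b k = m} = A ((List.range m).map b ++ [!b m]) := by
  rw [← hA.diff_append (by simpa using hm), ← List.map_singleton, ← List.map_append,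
    ← List.range_succ, ← hA.sep_le_level hm.le, ← hA.sep_le_level hm]
  ext k
  by_cases hk : k ∈ I <;> simp [hk]
  omega

lemma sep_level_eq_top (hA : IsTreePartition I L A) :
    {k ∈ I | level A L b k = L} = A ((List.range L).map b) := by
  rw [← hA.sep_le_level le_rfl]
  ext k
  have := level_le (A := A) (L := L) (b := b) k
  by_cases hk : k ∈ I <;> simp [hk]
  omega

end IsTreePartition

end Level

noncomputable def blockIdx (j : ℕ → ℕ) (k : ℕ) : ℕ :=
  Nat.findGreatest (fun n => j n ≤ k) k

lemma blockIdx_eq {j : ℕ → ℕ} (hj : StrictMono j) {n k : ℕ}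
    (hk : k ∈ Set.Ico (j n) (j (n + 1))) : blockIdx j k = n := by
  rw [blockIdx, Nat.findGreatest_eq_iff]
  refine ⟨hj.le_apply.trans hk.1, fun _ => hk.1, fun n' hn' _ hle => ?_⟩
  exact (hk.2.trans_le (hj.monotone hn')).not_ge hle

noncomputable def blockLevel (j l : ℕ → ℕ) (T : ℕ → List Bool → Set ℕ) (c : ℕ → ℕ → Bool)
    (k : ℕ) : ℕ :=
  level (T (blockIdx j k)) (l (blockIdx j k)) (c (blockIdx j k)) k

lemma sep_blockLevel {j : ℕ → ℕ} (hj : StrictMono j) (l : ℕ → ℕ) (T : ℕ → List Bool → Set ℕ)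
    (c : ℕ → ℕ → Bool) (P : ℕ → Prop) (n : ℕ) :
    {k ∈ Set.Ico (j n) (j (n + 1)) | P (blockLevel j l T c k)} =
      {k ∈ Set.Ico (j n) (j (n + 1)) | P (level (T n) (l n) (c n) k)} :=
  Set.sep_ext_iff.2 fun k hk => by rw [blockLevel, blockIdx_eq hj hk]

/-- A probe `⟨N, i, e⟩` reads the first `N` digits of a point of Cantor space and
answers with a node `e` of length `i`. -/
abbrev Probe : Type := Σ N i : ℕ, (Fin N → Bool) → Fin i → Bool

noncomputable def probeSchedule (n : ℕ) : Probe :=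
  (exists_surjective_nat Probe).choose n.unpair.1

lemma infinite_setOf_probeSchedule_eq (p : Probe) : {n | probeSchedule n = p}.Infinite := by
  obtain ⟨a, ha⟩ := (exists_surjective_nat Probe).choose_spec p
  refine Set.infinite_of_injective_forall_mem (f := Nat.pair a) ?_ fun b => ?_
  · exact fun b b' h => (Nat.pair_eq_pair.1 h).2
  · simp [probeSchedule, ha]

def Probe.answer (p : Probe) (x : ℕ → Bool) (t : ℕ) : Bool :=
  if h : t < p.2.1 then p.2.2 (fun s => x s) ⟨t, h⟩ else false

lemma Probe.map_range_answer_ne {N i : ℕ} {e : (Fin N → Bool) → Fin i → Bool} {x y : ℕ → Bool}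
    (hxy : e (fun s => x s) ≠ e (fun s => y s)) :
    (List.range i).map (Probe.answer ⟨N, i, e⟩ x) ≠
      (List.range i).map (Probe.answer ⟨N, i, e⟩ y) := by
  rw [Ne, List.map_inj_left]
  refine fun h => hxy (funext fun t => ?_)
  simpa [Probe.answer] using h t (List.mem_range.2 t.isLt)

noncomputable def probeBranch (x : ℕ → Bool) (n : ℕ) : ℕ → Bool :=
  (probeSchedule n).answer x

lemma exists_injOn_restrict {β : Type*} (S : Finset (ℕ → β)) :
    ∃ N, Set.InjOn (fun (x : ℕ → β) (s : Fin N) => x s) S := by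
  classical
  choose! d hd using fun p (_ : p ∈ S.offDiag) => Function.ne_iff.1 (Finset.mem_offDiag.1 ‹_›).2.2
  refine ⟨S.offDiag.sup d + 1, fun x hx y hy hxy => ?_⟩
  by_contra hne
  have hp : (x, y) ∈ S.offDiag := Finset.mem_offDiag.2 ⟨hx, hy, hne⟩
  have hlt : d (x, y) < S.offDiag.sup d + 1 := Nat.lt_succ_of_le (Finset.le_sup hp)
  exact hd _ hp (congrFun hxy ⟨_, hlt⟩)

lemma exists_injOn_of_card_le {α β : Type*} [Fintype β] [Nonempty β] {S : Finset α}
    (h : S.card ≤ Fintype.card β) : ∃ e : α → β, Set.InjOn e S := by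
  classical
  obtain ⟨g⟩ := Function.Embedding.nonempty_of_card_le (α := S) (by simpa using h)
  refine ⟨fun a => if ha : a ∈ S then g ⟨a, ha⟩ else Classical.arbitrary β, fun a ha a' ha' h => ?_⟩
  simp only [Finset.mem_coe] at ha ha'
  simpa [ha, ha'] using h

theorem infinite_setOf_injOn_map_probeBranch (i : ℕ) (S : Finset (ℕ → Bool))
    (hS : S.card ≤ 2 ^ i) :
    {n | Set.InjOn (fun x => (List.range i).map (probeBranch x n)) S}.Infinite := by
  classical
  obtain ⟨N, hN⟩ := exists_injOn_restrict S
  obtain ⟨e, he⟩ := exists_injOn_of_card_le (β := Fin i → Bool)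
    ((Finset.card_image_le (f := fun (x : ℕ → Bool) (s : Fin N) => x s)).trans (by simpa using hS))
  refine (infinite_setOf_probeSchedule_eq ⟨N, i, e⟩).mono
    fun n (hn : probeSchedule n = _) x hx y hy hxy => ?_
  by_contra hne
  simp only [probeBranch, hn] at hxy
  refine Probe.map_range_answer_ne (fun h => hne (hN hx hy ?_)) hxy
  exact he (Finset.mem_image_of_mem _ hx) (Finset.mem_image_of_mem _ hy) h

lemma nonempty_embedding_cantor : Nonempty ((aleph 1).ord.ToType ↪ (ℕ → Bool)) := by
  rw [← lift_mk_le', mk_toType, card_ord, lift_uzero, mk_arrow, mk_bool, mk_nat, lift_ofNat,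
    lift_aleph0, two_power_aleph0, lift_continuum]
  exact aleph_one_le_continuum

theorem stmt_12_general (j : ℕ → ℕ) (hj : StrictMono j)
    (l : ℕ → ℕ) (hl : ∀ n, 0 < l n ∧ n ≤ l n ∧ j (n + 1) - j n = 2 ^ l n)
    (T : ℕ → List Bool → Set ℕ)
    (hT1 : ∀ n, ∀ m ≤ l n,
      (∀ x ∈ Set.Ico (j n) (j (n + 1)), ∃ σ : List Bool, σ.length = m ∧ x ∈ T n σ) ∧
      ∀ σ τ : List Bool, σ.length = m → τ.length = m → σ ≠ τ → T n σ ∩ T n τ = ∅)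
    (hT2 : ∀ n, ∀ σ : List Bool, σ.length ≤ l n →
      T n σ ⊆ Set.Ico (j n) (j (n + 1)) ∧ Nat.card ↥(T n σ) = 2 ^ (l n - σ.length))
    (hT3 : ∀ n, ∀ σ τ : List Bool, τ.length ≤ l n → σ <+: τ → T n τ ⊆ T n σ) :
    ∃ f : (Cardinal.aleph 1).ord.ToType → (ℕ → ℕ),
      (∀ α, ∀ n,
        (∀ m < l n, ∃ σ : List Bool, σ.length = m + 1 ∧
          {k ∈ Set.Ico (j n) (j (n + 1)) | f α k = m} = T n σ) ∧
        (∃ τ : List Bool, τ.length = l n ∧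
          {k ∈ Set.Ico (j n) (j (n + 1)) | f α k = l n} = T n τ)) ∧
      ∀ (i m : ℕ), m ≤ 2 ^ i →
        ∀ F : Finset (Cardinal.aleph 1).ord.ToType, F.card = m →
          ∃ B : Set ℕ, B.Infinite ∧ B ⊆ Set.Ici i ∧
            ∀ α ∈ F, ∀ β ∈ F, α ≠ β → ∀ n ∈ B,
              {k ∈ Set.Ico (j n) (j (n + 1)) | i ≤ f α k} ≠
                {k ∈ Set.Ico (j n) (j (n + 1)) | i ≤ f β k} := by
  have hA (n : ℕ) : IsTreePartition (Set.Ico (j n) (j (n + 1))) (l n) (T n) :=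
    { ncard_eq := by rw [Set.ncard_Ico_nat, (hl n).2.2]
      subset := fun σ hσ => (hT2 n σ hσ).1
      ncard_node := fun σ hσ => by rw [← Nat.card_coe_set_eq, (hT2 n σ hσ).2]
      disjoint := fun σ τ hlen hτ hne => Set.disjoint_iff_inter_eq_empty.2 <|
        (hT1 n _ hτ).2 σ τ hlen rfl hne
      antitone := hT3 n }
  obtain ⟨ι⟩ := nonempty_embedding_cantor
  refine ⟨fun α => blockLevel j l T (probeBranch (ι α)), fun α n => ⟨fun m hm => ?_, ?_⟩, ?_⟩
  · rw [sep_blockLevel hj l T _ (· = m), (hA n).sep_level_eq hm]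
    exact ⟨_, by simp, rfl⟩
  · rw [sep_blockLevel hj l T _ (· = l n), (hA n).sep_level_eq_top]
    exact ⟨_, by simp, rfl⟩
  intro i m hm F hF
  have hS : (F.map ι).card ≤ 2 ^ i := by rwa [Finset.card_map, hF]
  refine ⟨_ \ Set.Iio i, (infinite_setOf_injOn_map_probeBranch i _ hS).sdiff (Set.finite_Iio i),
    by simp [Set.sdiff_eq], fun α hα β hβ hαβ n ⟨hsep, hn⟩ => ?_⟩
  have hi : i ≤ l n := (not_lt.1 hn).trans (hl n).2.1
  rw [sep_blockLevel hj l T _ (i ≤ ·), sep_blockLevel hj l T _ (i ≤ ·),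
    (hA n).sep_le_level hi, (hA n).sep_le_level hi]
  refine (hA n).ne_of_ne (by simp) (by simpa using hi) fun h => hαβ (ι.injective ?_)
  exact hsep (Finset.mem_map_of_mem ι hα) (Finset.mem_map_of_mem ι hβ) h

/-- with `j`, `l`, tree system `T` as in the definition of `F_{J,Ā}`,
there is an ω₁-sequence of functions in `F_{J,Ā}` such that for every triple `(i, m, F)`
with `m ≤ 2^i` and `F ∈ [ω₁]^m`, there is an infinite `B ⊆ ω \ i` such that for all
distinct `α, β ∈ F` and all `n ∈ B`, the level-`i` codes of `f_α` and `f_β` at `n` are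
distinct (equivalently, the sets `{k ∈ J_n : f_α k ≥ i}` and `{k ∈ J_n : f_β k ≥ i}`
are distinct). -/
theorem stmt_12 (j : ℕ → ℕ) (hj0 : j 0 = 0) (hj : StrictMono j)
    (l : ℕ → ℕ) (hl : ∀ n, 0 < l n ∧ n ≤ l n ∧ j (n + 1) - j n = 2 ^ l n)
    (T : ℕ → List Bool → Set ℕ)
    (hT1 : ∀ n, ∀ m ≤ l n,
      (∀ x ∈ Set.Ico (j n) (j (n + 1)), ∃ σ : List Bool, σ.length = m ∧ x ∈ T n σ) ∧
      ∀ σ τ : List Bool, σ.length = m → τ.length = m → σ ≠ τ → T n σ ∩ T n τ = ∅)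
    (hT2 : ∀ n, ∀ σ : List Bool, σ.length ≤ l n →
      T n σ ⊆ Set.Ico (j n) (j (n + 1)) ∧ Nat.card ↥(T n σ) = 2 ^ (l n - σ.length))
    (hT3 : ∀ n, ∀ σ τ : List Bool, τ.length ≤ l n → σ <+: τ → T n τ ⊆ T n σ)
    (hT4 : ∀ n, ∀ σ : List Bool, σ.length ≤ l n → ∀ x ∈ T n σ, ∀ y ∈ T n σ, x ≠ y →
      (2 : ℝ) ^ ((σ.length : ℤ) - 1) < |(x : ℝ) - (y : ℝ)|) :
    ∃ f : (Cardinal.aleph 1).ord.ToType → (ℕ → ℕ),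
      (∀ α, ∀ n,
        (∀ m < l n, ∃ σ : List Bool, σ.length = m + 1 ∧
          {k ∈ Set.Ico (j n) (j (n + 1)) | f α k = m} = T n σ) ∧
        (∃ τ : List Bool, τ.length = l n ∧
          {k ∈ Set.Ico (j n) (j (n + 1)) | f α k = l n} = T n τ)) ∧
      ∀ (i m : ℕ), m ≤ 2 ^ i →
        ∀ F : Finset (Cardinal.aleph 1).ord.ToType, F.card = m →
          ∃ B : Set ℕ, B.Infinite ∧ B ⊆ Set.Ici i ∧
            ∀ α ∈ F, ∀ β ∈ F, α ≠ β → ∀ n ∈ B,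
              {k ∈ Set.Ico (j n) (j (n + 1)) | i ≤ f α k} ≠
                {k ∈ Set.Ico (j n) (j (n + 1)) | i ≤ f β k} :=
  stmt_12_general j hj l hl T hT1 hT2 hT3
end

section
/- Fix J ∈ D and α < ω₁ in the construction, and for each I ∈ D let Z_{I,J,α} = ⋃_{l∈ω} ⋃_{k∈I_l} {x ∈ J_k : f_{J,α}(x) ≥ l}. Then each Z_{I,J,α} has asymptotic density 0. -/
open Filter

lemma treeLemma (j l : ℕ → ℕ) (T : ℕ → List Bool → Set ℕ) (f : ℕ → ℕ)
    (hT1 : ∀ n, ∀ m ≤ l n,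
      (∀ x ∈ Set.Ico (j n) (j (n + 1)), ∃ σ : List Bool, σ.length = m ∧ x ∈ T n σ) ∧
      ∀ σ τ : List Bool, σ.length = m → τ.length = m → σ ≠ τ → T n σ ∩ T n τ = ∅)
    (hT2 : ∀ n, ∀ σ : List Bool, σ.length ≤ l n →
      T n σ ⊆ Set.Ico (j n) (j (n + 1)) ∧ Nat.card ↥(T n σ) = 2 ^ (l n - σ.length))
    (hT3 : ∀ n, ∀ σ τ : List Bool, τ.length ≤ l n → σ <+: τ → T n τ ⊆ T n σ)
    (hf : ∀ n,
      (∀ m < l n, ∃ σ : List Bool, σ.length = m + 1 ∧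
        {k ∈ Set.Ico (j n) (j (n + 1)) | f k = m} = T n σ) ∧
      (∃ τ : List Bool, τ.length = l n ∧
        {k ∈ Set.Ico (j n) (j (n + 1)) | f k = l n} = T n τ))
    (n : ℕ) : ∀ m ≤ l n, ∃ τ : List Bool, τ.length = m ∧
      {x ∈ Set.Ico (j n) (j (n + 1)) | m ≤ f x} = T n τ := by
  intro m
  induction m with
  | zero =>
    intro _
    refine ⟨[], rfl, ?_⟩
    ext x
    simp only [Set.mem_setOf_eq, Set.mem_sep_iff, Nat.zero_le, and_true]
    constructor
    · intro hx
      obtain ⟨σ, hσlen, hσ⟩ := (hT1 n 0 (Nat.zero_le _)).1 x hx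
      rwa [List.length_eq_zero_iff.mp hσlen] at hσ
    · intro hx
      exact (hT2 n [] (Nat.zero_le _)).1 hx
  | succ m IH =>
    intro hm1
    have hmlt : m < l n := hm1
    obtain ⟨τ, hτlen, hτ⟩ := IH (le_of_lt hmlt)
    obtain ⟨σ, hσlen, hσ⟩ := (hf n).1 m hmlt
    have hσle : σ.length ≤ l n := by omega
    -- T n σ is nonempty
    have hne : (T n σ).Nonempty := by
      apply Set.nonempty_of_ncard_ne_zero
      rw [← Nat.card_coe_set_eq, (hT2 n σ hσle).2]
      positivity
    obtain ⟨x₀, hx₀⟩ := hne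
    have hx₀' : x₀ ∈ {k ∈ Set.Ico (j n) (j (n + 1)) | f k = m} := hσ ▸ hx₀
    -- take-prefix uniqueness helper
    have prefix_eq : ∀ ρ : List Bool, ρ.length = m + 1 → ∀ x, x ∈ T n ρ →
        x ∈ T n τ → ρ.take m = τ := by
      intro ρ hρlen x hx hxτ
      by_contra hne'
      have h1 : x ∈ T n (ρ.take m) :=
        hT3 n (ρ.take m) ρ (by omega) (List.take_prefix m ρ) hx
      have h2 := (hT1 n m (le_of_lt hmlt)).2 (ρ.take m) τ
        (by rw [List.length_take]; omega) hτlen hne'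
      exact absurd h2 (Set.nonempty_iff_ne_empty.mp ⟨x, h1, hxτ⟩)
    have hx₀τ : x₀ ∈ T n τ := by
      rw [← hτ]; exact ⟨hx₀'.1, le_of_eq hx₀'.2.symm⟩
    have hστ : σ.take m = τ := prefix_eq σ hσlen x₀ hx₀ hx₀τ
    -- write σ = τ ++ [c]
    obtain ⟨c, hc⟩ : ∃ c, σ.drop m = [c] := by
      have : (σ.drop m).length = 1 := by rw [List.length_drop]; omega
      exact List.length_eq_one_iff.mp this
    have hσeq : σ = τ ++ [c] := by rw [← hστ, ← hc, List.take_append_drop]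
    refine ⟨τ ++ [!c], by simp [hτlen], ?_⟩
    have hτ'len : (τ ++ [!c]).length ≤ l n := by simp [hτlen]; omega
    ext x
    simp only [Set.mem_sep_iff, Set.mem_setOf_eq]
    constructor
    · rintro ⟨hxJ, hxf⟩
      obtain ⟨ρ, hρlen, hρ⟩ := (hT1 n (m + 1) hm1).1 x hxJ
      have hxτ : x ∈ T n τ := by
        rw [← hτ]; exact ⟨hxJ, by omega⟩
      have hρτ : ρ.take m = τ := prefix_eq ρ hρlen x hρ hxτ
      obtain ⟨d, hd⟩ : ∃ d, ρ.drop m = [d] := by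
        have : (ρ.drop m).length = 1 := by rw [List.length_drop]; omega
        exact List.length_eq_one_iff.mp this
      have hρeq : ρ = τ ++ [d] := by rw [← hρτ, ← hd, List.take_append_drop]
      have hdc : d ≠ c := by
        intro h
        rw [h, ← hσeq] at hρeq
        rw [hρeq, ← hσ] at hρ
        exact absurd hρ.2 (by omega)
      have : d = !c := by
        cases c <;> cases d <;> simp_all
      rwa [hρeq, this] at hρ
    · intro hx
      have hxJ : x ∈ Set.Ico (j n) (j (n + 1)) := (hT2 n _ hτ'len).1 hx
      have hxτ : x ∈ T n τ := hT3 n τ (τ ++ [!c]) hτ'len (List.prefix_append _ _) hx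
      have hxm : m ≤ f x := by rw [← hτ] at hxτ; exact hxτ.2
      refine ⟨hxJ, ?_⟩
      rcases Nat.lt_or_ge m (f x) with h | h
      · omega
      · exfalso
        have hfx : f x = m := by omega
        have hxσ : x ∈ T n σ := by rw [← hσ]; exact ⟨hxJ, hfx⟩
        have hd := (hT1 n (m + 1) hm1).2 σ (τ ++ [!c]) hσlen (by simp [hτlen]) ?_
        · exact absurd hd (Set.nonempty_iff_ne_empty.mp ⟨x, hxσ, hx⟩)
        · rw [hσeq]
          simp

lemma spacing_count (S : Set ℕ) (s N : ℕ)
    (hsp : ∀ x ∈ S, ∀ y ∈ S, x < y → s + 1 ≤ y - x) :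
    (S ∩ Set.Iio N).ncard ≤ N / (s + 1) + 1 := by
  have key : ∀ x ∈ S, ∀ y ∈ S, x < y → x / (s + 1) < y / (s + 1) := by
    intro x hx y hy h
    have h1 := hsp x hx y hy h
    have h2 : (x + (s + 1)) / (s + 1) ≤ y / (s + 1) := Nat.div_le_div_right (by omega)
    have h3 : (x + (s + 1)) / (s + 1) = x / (s + 1) + 1 := Nat.add_div_right x (by omega)
    omega
  have : (S ∩ Set.Iio N).ncard ≤ (Set.Iio (N / (s + 1) + 1)).ncard := by
    apply Set.ncard_le_ncard_of_injOn (fun x => x / (s + 1)) (ht := Set.finite_Iio _)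
    · rintro x ⟨_, hx⟩
      simp only [Set.mem_Iio] at hx ⊢
      have : x / (s + 1) ≤ N / (s + 1) := Nat.div_le_div_right (le_of_lt hx)
      omega
    · rintro x ⟨hxS, _⟩ y ⟨hyS, _⟩ hxy
      have hxy' : x / (s + 1) = y / (s + 1) := hxy
      by_contra hne
      rcases Nat.lt_or_ge x y with h | h
      · exact absurd hxy' (Nat.ne_of_lt (key x hxS y hyS h))
      · exact absurd hxy'.symm (Nat.ne_of_lt (key y hyS x hxS (by omega)))
  calc (S ∩ Set.Iio N).ncard ≤ (Set.Iio (N / (s + 1) + 1)).ncard := this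
    _ = N / (s + 1) + 1 := by rw [← Finset.coe_Iio, Set.ncard_coe_finset, Nat.card_Iio]

/-- with `j`, `l`, tree system `T` as in the construction, `f = f_{J,α}`
a member of `F_{J,Ā}`, and `ii` an interval partition (a member `I` of `D`),
the set `Z_{I,J,α} = ⋃_{l} ⋃_{k ∈ I_l} {x ∈ J_k : f x ≥ l}` has asymptotic density 0. -/
theorem stmt_14 (j : ℕ → ℕ) (hj0 : j 0 = 0) (hj : StrictMono j)
    (l : ℕ → ℕ) (hl : ∀ n, 0 < l n ∧ n ≤ l n ∧ j (n + 1) - j n = 2 ^ l n)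
    (T : ℕ → List Bool → Set ℕ)
    (hT1 : ∀ n, ∀ m ≤ l n,
      (∀ x ∈ Set.Ico (j n) (j (n + 1)), ∃ σ : List Bool, σ.length = m ∧ x ∈ T n σ) ∧
      ∀ σ τ : List Bool, σ.length = m → τ.length = m → σ ≠ τ → T n σ ∩ T n τ = ∅)
    (hT2 : ∀ n, ∀ σ : List Bool, σ.length ≤ l n →
      T n σ ⊆ Set.Ico (j n) (j (n + 1)) ∧ Nat.card ↥(T n σ) = 2 ^ (l n - σ.length))
    (hT3 : ∀ n, ∀ σ τ : List Bool, τ.length ≤ l n → σ <+: τ → T n τ ⊆ T n σ)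
    (hT4 : ∀ n, ∀ σ : List Bool, σ.length ≤ l n → ∀ x ∈ T n σ, ∀ y ∈ T n σ, x ≠ y →
      (2 : ℝ) ^ ((σ.length : ℤ) - 1) < |(x : ℝ) - (y : ℝ)|)
    (f : ℕ → ℕ)
    (hf : ∀ n,
      (∀ m < l n, ∃ σ : List Bool, σ.length = m + 1 ∧
        {k ∈ Set.Ico (j n) (j (n + 1)) | f k = m} = T n σ) ∧
      (∃ τ : List Bool, τ.length = l n ∧
        {k ∈ Set.Ico (j n) (j (n + 1)) | f k = l n} = T n τ))
    (ii : ℕ → ℕ) (hii0 : ii 0 = 0) (hii : StrictMono ii) :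
    densityZero (⋃ lev : ℕ, ⋃ k ∈ Set.Ico (ii lev) (ii (lev + 1)),
      {x ∈ Set.Ico (j k) (j (k + 1)) | lev ≤ f x}) := by
  have htree := treeLemma j l T f hT1 hT2 hT3 hf
  unfold densityZero
  set Z : Set ℕ := ⋃ lev : ℕ, ⋃ k ∈ Set.Ico (ii lev) (ii (lev + 1)),
      {x ∈ Set.Ico (j k) (j (k + 1)) | lev ≤ f x} with hZdef
  have hjmono := hj.monotone
  have hjfin : ∀ a b : ℕ, (Z ∩ Set.Ico a b).Finite :=
    fun a b => (Set.finite_Ico a b).subset Set.inter_subset_right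
  -- the level function
  set L : ℕ → ℕ := fun n => Nat.findGreatest (fun lev => ii lev ≤ n) n with hLdef
  have hL1 : ∀ n, ii (L n) ≤ n := fun n =>
    Nat.findGreatest_spec (P := fun lev => ii lev ≤ n) (Nat.zero_le n)
      (by simp [hii0])
  have hL2 : ∀ n lev, ii lev ≤ n → lev ≤ L n := fun n lev h =>
    Nat.le_findGreatest (le_trans hii.le_apply h) h
  have hLmax : ∀ n lev, n < ii (lev + 1) → L n ≤ lev := by
    intro n lev h
    have h1 : ii (L n) < ii (lev + 1) := lt_of_le_of_lt (hL1 n) h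
    have h2 := hii.lt_iff_lt.mp h1
    omega
  -- membership in Z within one j-interval
  have hZJ : ∀ n, Z ∩ Set.Ico (j n) (j (n + 1)) ⊆
      {x ∈ Set.Ico (j n) (j (n + 1)) | min (L n) (l n) ≤ f x} := by
    rintro n x ⟨hxZ, hxJ⟩
    simp only [hZdef, Set.mem_iUnion, Set.mem_sep_iff, Set.mem_Ico] at hxZ
    obtain ⟨lev, k, hk, ⟨hxk1, hxk2⟩, hlevf⟩ := hxZ
    obtain ⟨hxJ1, hxJ2⟩ := hxJ
    have hkn : k = n := by
      by_contra hne
      rcases Nat.lt_or_ge k n with h | h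
      · have h2 : j (k + 1) ≤ j n := hjmono h
        omega
      · have h2 : j (n + 1) ≤ j k := hjmono (by omega)
        omega
    subst hkn
    have hLlev : L k ≤ lev := hLmax k lev hk.2
    exact ⟨⟨hxJ1, hxJ2⟩, le_trans (le_trans (min_le_left _ _) hLlev) hlevf⟩
  have hTfin : ∀ n τ, τ.length ≤ l n → (T n τ).Finite := fun n τ h =>
    (Set.finite_Ico _ _).subset (hT2 n τ h).1
  -- cardinality bound for a full interval
  have hcard : ∀ B n, B ≤ L n → B ≤ l n →
      (Z ∩ Set.Ico (j n) (j (n + 1))).ncard ≤ 2 ^ (l n - B) := by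
    intro B n hBL hBl
    set m := min (L n) (l n) with hm
    obtain ⟨τ, hτlen, hτ⟩ := htree n m (min_le_right _ _)
    have hsub : Z ∩ Set.Ico (j n) (j (n + 1)) ⊆ T n τ := by
      intro x hx; rw [← hτ]; exact hZJ n hx
    calc (Z ∩ Set.Ico (j n) (j (n + 1))).ncard ≤ (T n τ).ncard :=
        Set.ncard_le_ncard hsub (hTfin n τ (by rw [hτlen]; exact min_le_right _ _))
      _ = 2 ^ (l n - m) := by
          rw [← Nat.card_coe_set_eq, (hT2 n τ (by rw [hτlen]; exact min_le_right _ _)).2, hτlen]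
      _ ≤ 2 ^ (l n - B) := Nat.pow_le_pow_right (by norm_num) (by omega)
  -- spacing bound for a partial interval
  have hlast : ∀ B n N, 1 ≤ B → B ≤ L n → B ≤ l n → N ≤ j (n + 1) →
      (Z ∩ Set.Ico (j n) N).ncard ≤ N / 2 ^ (B - 1) + 1 := by
    intro B n N hB hBL hBl hN
    set m := min (L n) (l n) with hm
    have hm1 : 1 ≤ m := by omega
    have hmln : m ≤ l n := min_le_right _ _
    obtain ⟨τ, hτlen, hτ⟩ := htree n m hmln
    have hsub : Z ∩ Set.Ico (j n) N ⊆ T n τ ∩ Set.Iio N := by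
      rintro x ⟨hxZ, hxI⟩
      have hxJ : x ∈ Set.Ico (j n) (j (n + 1)) := ⟨hxI.1, lt_of_lt_of_le hxI.2 hN⟩
      exact ⟨by rw [← hτ]; exact hZJ n ⟨hxZ, hxJ⟩, hxI.2⟩
    have hsp : ∀ x ∈ T n τ, ∀ y ∈ T n τ, x < y → 2 ^ (m - 1) + 1 ≤ y - x := by
      intro x hx y hy hxy
      have h4 := hT4 n τ (by omega) x hx y hy (by omega)
      rw [hτlen] at h4
      have hcast : |(x : ℝ) - (y : ℝ)| = ((y - x : ℕ) : ℝ) := by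
        rw [abs_sub_comm, Nat.cast_sub (le_of_lt hxy)]
        exact abs_of_nonneg (sub_nonneg.mpr (Nat.cast_le.mpr (le_of_lt hxy)))
      rw [hcast] at h4
      have hexp : ((m : ℤ) - 1) = ((m - 1 : ℕ) : ℤ) := by omega
      rw [hexp, zpow_natCast] at h4
      have h5 : (2 : ℕ) ^ (m - 1) < y - x := by exact_mod_cast h4
      omega
    calc (Z ∩ Set.Ico (j n) N).ncard ≤ (T n τ ∩ Set.Iio N).ncard :=
        Set.ncard_le_ncard hsub ((Set.finite_Iio N).subset Set.inter_subset_right)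
      _ ≤ N / (2 ^ (m - 1) + 1) + 1 := spacing_count _ _ _ hsp
      _ ≤ N / 2 ^ (B - 1) + 1 := by
          have h1 : 2 ^ (B - 1) ≤ 2 ^ (m - 1) + 1 :=
            le_trans (Nat.pow_le_pow_right (by norm_num) (by omega)) (Nat.le_succ _)
          exact Nat.add_le_add_right (Nat.div_le_div_left h1 (by positivity)) 1
  -- subadditivity over consecutive intervals
  have hsum : ∀ K d, (Z ∩ Set.Ico (j K) (j (K + d))).ncard ≤
      ∑ n ∈ Finset.Ico K (K + d), (Z ∩ Set.Ico (j n) (j (n + 1))).ncard := by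
    intro K d
    induction d with
    | zero => simp
    | succ d IH =>
      have hsplit : Set.Ico (j K) (j (K + d + 1)) =
          Set.Ico (j K) (j (K + d)) ∪ Set.Ico (j (K + d)) (j (K + d + 1)) :=
        (Set.Ico_union_Ico_eq_Ico (hjmono (by omega)) (hjmono (by omega))).symm
      have : Z ∩ Set.Ico (j K) (j (K + (d + 1))) =
          (Z ∩ Set.Ico (j K) (j (K + d))) ∪ (Z ∩ Set.Ico (j (K + d)) (j (K + d + 1))) := by
        rw [show K + (d + 1) = K + d + 1 from rfl, hsplit, Set.inter_union_distrib_left]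
      rw [this, show K + (d + 1) = K + d + 1 from rfl, Finset.sum_Ico_succ_top (by omega)]
      exact le_trans (Set.ncard_union_le _ _) (Nat.add_le_add IH le_rfl)
  -- telescoping size sum
  have htel : ∀ K d, ∑ n ∈ Finset.Ico K (K + d), 2 ^ l n = j (K + d) - j K := by
    intro K d
    induction d with
    | zero => simp
    | succ d IH =>
      rw [show K + (d + 1) = K + d + 1 from rfl, Finset.sum_Ico_succ_top (by omega), IH]
      have h1 : j K ≤ j (K + d) := hjmono (by omega)
      have h2 : j (K + d) ≤ j (K + d + 1) := hjmono (by omega)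
      have h3 := (hl (K + d)).2.2
      omega
  -- the main estimate
  have main : ∀ B, 1 ≤ B → ∀ N : ℕ,
      ((Z ∩ Set.Iio N).ncard : ℝ) ≤ ((j (max (ii B) B) : ℝ) + 1) + 3 * ((2 : ℝ) ^ B)⁻¹ * N := by
    intro B hB N
    set K := max (ii B) B with hK
    set M := Nat.findGreatest (fun M => j M ≤ N) N with hM
    have hM1 : j M ≤ N := Nat.findGreatest_spec (P := fun M => j M ≤ N) (Nat.zero_le N)
      (by simp [hj0])
    have hM2 : N < j (M + 1) := by
      by_contra h
      push_neg at h
      have : M + 1 ≤ M := Nat.le_findGreatest (le_trans hj.le_apply h) h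
      omega
    have h2Bpos : (0 : ℝ) < (2 : ℝ) ^ B := by positivity
    have hNnn : (0 : ℝ) ≤ (N : ℝ) := Nat.cast_nonneg N
    have hterm : (0 : ℝ) ≤ 3 * ((2 : ℝ) ^ B)⁻¹ * N := by positivity
    rcases Nat.lt_or_ge M K with hMK | hMK
    · have hb : (Z ∩ Set.Iio N).ncard ≤ j K := by
        calc (Z ∩ Set.Iio N).ncard ≤ (Set.Iio N).ncard :=
            Set.ncard_le_ncard Set.inter_subset_right (Set.finite_Iio N)
          _ = N := by rw [← Finset.coe_Iio, Set.ncard_coe_finset, Nat.card_Iio]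
          _ ≤ j K := by
              have := hjmono (show M + 1 ≤ K by omega)
              omega
      have hb' : ((Z ∩ Set.Iio N).ncard : ℝ) ≤ (j K : ℝ) := by exact_mod_cast hb
      linarith
    · have hBln : ∀ n, K ≤ n → B ≤ l n := fun n h =>
        le_trans (le_trans (le_max_right _ _) h) (hl n).2.1
      have hBLn : ∀ n, K ≤ n → B ≤ L n := fun n h => hL2 n B (le_trans (le_max_left _ _) h)
      have hdec : Z ∩ Set.Iio N ⊆
          (Z ∩ Set.Iio (j K)) ∪ ((Z ∩ Set.Ico (j K) (j M)) ∪ (Z ∩ Set.Ico (j M) N)) := by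
        rintro x ⟨hxZ, hxN⟩
        simp only [Set.mem_union, Set.mem_inter_iff, Set.mem_Iio, Set.mem_Ico] at hxN ⊢
        rcases Nat.lt_or_ge x (j K) with h | h
        · exact Or.inl ⟨hxZ, h⟩
        · rcases Nat.lt_or_ge x (j M) with h2 | h2
          · exact Or.inr (Or.inl ⟨hxZ, h, h2⟩)
          · exact Or.inr (Or.inr ⟨hxZ, h2, hxN⟩)
      have hn1 : (Z ∩ Set.Iio (j K)).ncard ≤ j K := by
        calc (Z ∩ Set.Iio (j K)).ncard ≤ (Set.Iio (j K)).ncard :=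
            Set.ncard_le_ncard Set.inter_subset_right (Set.finite_Iio _)
          _ = j K := by rw [← Finset.coe_Iio, Set.ncard_coe_finset, Nat.card_Iio]
      obtain ⟨d, hd⟩ : ∃ d, M = K + d := ⟨M - K, by omega⟩
      -- middle bound, all in ℕ
      have hn2 : (Z ∩ Set.Ico (j K) (j M)).ncard ≤ N / 2 ^ B := by
        have step1 : (Z ∩ Set.Ico (j K) (j M)).ncard ≤
            ∑ n ∈ Finset.Ico K M, 2 ^ (l n - B) := by
          rw [hd]
          refine le_trans (hsum K d) (Finset.sum_le_sum ?_)
          intro n hn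
          simp only [Finset.mem_Ico] at hn
          exact hcard B n (hBLn n hn.1) (hBln n hn.1)
        have step2 : (∑ n ∈ Finset.Ico K M, 2 ^ (l n - B)) * 2 ^ B ≤ N := by
          rw [Finset.sum_mul]
          have : ∀ n ∈ Finset.Ico K M, 2 ^ (l n - B) * 2 ^ B = 2 ^ l n := by
            intro n hn
            simp only [Finset.mem_Ico] at hn
            rw [← pow_add]
            congr 1
            have := hBln n hn.1
            omega
          rw [Finset.sum_congr rfl this, hd, htel K d, ← hd]
          omega
        have := Nat.le_div_iff_mul_le (show 0 < 2 ^ B by positivity) |>.mpr step2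
        omega
      have hn3 : (Z ∩ Set.Ico (j M) N).ncard ≤ N / 2 ^ (B - 1) + 1 :=
        hlast B M N hB (hBLn M hMK) (hBln M hMK) (le_of_lt hM2)
      have htot : (Z ∩ Set.Iio N).ncard ≤ j K + N / 2 ^ B + (N / 2 ^ (B - 1) + 1) := by
        refine le_trans (Set.ncard_le_ncard hdec ?_) ?_
        · exact (((Set.finite_Iio _).subset Set.inter_subset_right).union
            ((hjfin _ _).union (hjfin _ _)))
        refine le_trans (Set.ncard_union_le _ _) ?_
        refine le_trans (Nat.add_le_add hn1 (Set.ncard_union_le _ _)) ?_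
        omega
      -- cast to ℝ
      have hc1 : ((N / 2 ^ B : ℕ) : ℝ) ≤ ((2 : ℝ) ^ B)⁻¹ * N := by
        calc ((N / 2 ^ B : ℕ) : ℝ) ≤ (N : ℝ) / ((2 ^ B : ℕ) : ℝ) := Nat.cast_div_le
          _ = ((2 : ℝ) ^ B)⁻¹ * N := by push_cast; ring
      have hc2 : ((N / 2 ^ (B - 1) : ℕ) : ℝ) ≤ 2 * ((2 : ℝ) ^ B)⁻¹ * N := by
        have hpow : (2 : ℝ) ^ B = (2 : ℝ) ^ (B - 1) * 2 := by
          rw [← pow_succ]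
          congr 1
          omega
        calc ((N / 2 ^ (B - 1) : ℕ) : ℝ) ≤ (N : ℝ) / ((2 ^ (B - 1) : ℕ) : ℝ) := Nat.cast_div_le
          _ = 2 * ((2 : ℝ) ^ B)⁻¹ * N := by
              push_cast
              rw [hpow]
              have : ((2 : ℝ) ^ (B - 1)) ≠ 0 := by positivity
              field_simp
      have htot' : ((Z ∩ Set.Iio N).ncard : ℝ) ≤
          (j K : ℝ) + ((N / 2 ^ B : ℕ) : ℝ) + (((N / 2 ^ (B - 1) : ℕ) : ℝ) + 1) := by
        exact_mod_cast htot
      calc ((Z ∩ Set.Iio N).ncard : ℝ)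
          ≤ (j K : ℝ) + ((N / 2 ^ B : ℕ) : ℝ) + (((N / 2 ^ (B - 1) : ℕ) : ℝ) + 1) := htot'
        _ ≤ (j K : ℝ) + ((2 : ℝ) ^ B)⁻¹ * N + (2 * ((2 : ℝ) ^ B)⁻¹ * N + 1) := by linarith
        _ = ((j K : ℝ) + 1) + 3 * ((2 : ℝ) ^ B)⁻¹ * N := by ring
  -- conclude
  rw [Metric.tendsto_atTop]
  intro ε hε
  obtain ⟨B₀, hB₀⟩ := exists_pow_lt_of_lt_one (show (0 : ℝ) < ε / 6 by linarith)
    (show (1 : ℝ) / 2 < 1 by norm_num)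
  set B := B₀ + 1 with hBdef
  have hB1 : 1 ≤ B := by omega
  have hBsmall : 3 * ((2 : ℝ) ^ B)⁻¹ < ε / 2 := by
    have h1 : ((2 : ℝ) ^ B)⁻¹ = ((1 : ℝ) / 2) ^ B := by rw [one_div, inv_pow]
    have h2 : ((1 : ℝ) / 2) ^ B ≤ ((1 : ℝ) / 2) ^ B₀ :=
      pow_le_pow_of_le_one (by norm_num) (by norm_num) (by omega)
    rw [h1]
    nlinarith
  set C : ℝ := (j (max (ii B) B) : ℝ) + 1 with hCdef
  have hC0 : 0 < C := by positivity
  refine ⟨⌈C / (ε / 2)⌉₊ + 1, fun N hN => ?_⟩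
  have hN1 : 1 ≤ N := by omega
  have hNpos : (0 : ℝ) < N := by exact_mod_cast Nat.lt_of_lt_of_le Nat.zero_lt_one hN1
  have hCN : C / N < ε / 2 := by
    rw [div_lt_iff₀ hNpos]
    have h1 : C / (ε / 2) ≤ (⌈C / (ε / 2)⌉₊ : ℝ) := Nat.le_ceil _
    have h2 : (⌈C / (ε / 2)⌉₊ : ℝ) + 1 ≤ N := by exact_mod_cast hN
    have h3 : C / (ε / 2) < (N : ℝ) := by linarith
    rw [div_lt_iff₀ (by linarith : (0 : ℝ) < ε / 2)] at h3
    linarith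
  have hmain : ((Z ∩ Set.Iio N).ncard : ℝ) ≤ C + 3 * ((2 : ℝ) ^ B)⁻¹ * N := by
    rw [hCdef]; exact main B hB1 N
  have hdist : dist ((Nat.card ↥(Z ∩ Set.Iio N) : ℝ) / N) 0 =
      ((Z ∩ Set.Iio N).ncard : ℝ) / N := by
    rw [Real.dist_eq, sub_zero, Nat.card_coe_set_eq]
    exact abs_of_nonneg (by positivity)
  calc dist ((fun n : ℕ => (Nat.card ↥(Z ∩ Set.Iio n) : ℝ) / n) N) 0
      = ((Z ∩ Set.Iio N).ncard : ℝ) / N := hdist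
    _ ≤ (C + 3 * ((2 : ℝ) ^ B)⁻¹ * N) / N := by gcongr
    _ = C / N + 3 * ((2 : ℝ) ^ B)⁻¹ := by
        rw [add_div, mul_div_assoc, div_self (ne_of_gt hNpos), mul_one]
    _ < ε / 2 + ε / 2 := by linarith
    _ = ε := by ring
end

section
/- Fix J ∈ D and α < ω₁. Suppose A ⊆ ω is such that for every I ∈ D, A ∩ Z_{I,J,α} is finite. Then the image f_{J,α}''A is bounded: there exists i ∈ ω with f_{J,α}(x) < i for all x ∈ A. -/
open Filter

/-- let `D` be a family of interval partitions such that every interval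
partition `K` has, for all but finitely many `n`, some interval `K_k` with `k > n`
contained in the `n`-th interval of some member of `D`.  Fix `J` (an interval partition
with `|J_n| = 2^{l n}`), a tree system `T` for it, and `f = f_{J,α} ∈ F_{J,Ā}`.
If `A ⊆ ω` has finite intersection with `Z_{I,J,α}` for every `I ∈ D`, then `f''A`
is bounded. -/
theorem stmt_15 (D : Set (ℕ → ℕ)) (hD : ∀ i ∈ D, IsIntervalPartition i)
    (hcatch : ∀ K : ℕ → ℕ, IsIntervalPartition K → ∃ i ∈ D, ∀ᶠ n in atTop,
      ∃ k > n, Set.Ico (K k) (K (k + 1)) ⊆ Set.Ico (i n) (i (n + 1)))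
    (j : ℕ → ℕ) (hj0 : j 0 = 0) (hj : StrictMono j)
    (l : ℕ → ℕ) (hl : ∀ n, 0 < l n ∧ n ≤ l n ∧ j (n + 1) - j n = 2 ^ l n)
    (T : ℕ → List Bool → Set ℕ)
    (hT1 : ∀ n, ∀ m ≤ l n,
      (∀ x ∈ Set.Ico (j n) (j (n + 1)), ∃ σ : List Bool, σ.length = m ∧ x ∈ T n σ) ∧
      ∀ σ τ : List Bool, σ.length = m → τ.length = m → σ ≠ τ → T n σ ∩ T n τ = ∅)
    (hT2 : ∀ n, ∀ σ : List Bool, σ.length ≤ l n →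
      T n σ ⊆ Set.Ico (j n) (j (n + 1)) ∧ Nat.card ↥(T n σ) = 2 ^ (l n - σ.length))
    (f : ℕ → ℕ)
    (hf : ∀ n,
      (∀ m < l n, ∃ σ : List Bool, σ.length = m + 1 ∧
        {k ∈ Set.Ico (j n) (j (n + 1)) | f k = m} = T n σ) ∧
      (∃ τ : List Bool, τ.length = l n ∧
        {k ∈ Set.Ico (j n) (j (n + 1)) | f k = l n} = T n τ))
    (A : Set ℕ)
    (hA : ∀ ii ∈ D, (A ∩ ⋃ lev : ℕ, ⋃ k ∈ Set.Ico (ii lev) (ii (lev + 1)),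
      {x ∈ Set.Ico (j k) (j (k + 1)) | lev ≤ f x}).Finite) :
    ∃ i : ℕ, ∀ x ∈ A, f x < i := by
  by_contra hcon
  push_neg at hcon
  -- block index function
  classical
  set blk : ℕ → ℕ := fun x => Nat.findGreatest (fun m => j m ≤ x) x with hblk
  have blk_le : ∀ x, j (blk x) ≤ x := by
    intro x
    exact Nat.findGreatest_spec (P := fun m => j m ≤ x) (Nat.zero_le x) (by simp [hj0])
  have blk_lt : ∀ x, x < j (blk x + 1) := by
    intro x
    by_contra h
    push_neg at h
    exact Nat.findGreatest_is_greatest (Nat.lt_succ_self (blk x))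
      (le_trans (hj.le_apply) h) h
  have blk_ge : ∀ {N x}, j N ≤ x → N ≤ blk x := by
    intro N x hNx
    by_contra h
    push_neg at h
    have : j (blk x + 1) ≤ j N := hj.monotone h
    exact absurd (lt_of_lt_of_le (blk_lt x) (le_trans this hNx)) (lt_irrefl x)
  -- witnesses with large f-value and living far to the right
  have H : ∀ k N : ℕ, ∃ x, x ∈ A ∧ k ≤ f x ∧ j N ≤ x := by
    intro k N
    obtain ⟨x, hxA, hfx⟩ := hcon (max k ((Finset.range (j N)).sup f + 1))
    refine ⟨x, hxA, le_trans (le_max_left _ _) hfx, ?_⟩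
    by_contra h
    push_neg at h
    have h1 : f x ≤ (Finset.range (j N)).sup f :=
      Finset.le_sup (Finset.mem_range.mpr h)
    have h2 : (Finset.range (j N)).sup f + 1 ≤ f x :=
      le_trans (le_max_right _ _) hfx
    omega
  set pick : ℕ → ℕ → ℕ := fun k N => Classical.choose (H k N) with hpick
  have pick_spec : ∀ k N, pick k N ∈ A ∧ k ≤ f (pick k N) ∧ j N ≤ pick k N :=
    fun k N => Classical.choose_spec (H k N)
  -- the interval partition K
  set K : ℕ → ℕ := fun n => Nat.rec 0 (fun k Kk => blk (pick k Kk) + 1) n with hK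
  have hK0 : K 0 = 0 := rfl
  have hKs : ∀ k, K (k + 1) = blk (pick k (K k)) + 1 := fun k => rfl
  have hKmono : StrictMono K := by
    apply strictMono_nat_of_lt_succ
    intro k
    rw [hKs]
    have := blk_ge (pick_spec k (K k)).2.2
    omega
  obtain ⟨i, hiD, hev⟩ := hcatch K ⟨hK0, hKmono⟩
  have hfin := hA i hiD
  rw [eventually_atTop] at hev
  obtain ⟨N₀, hN₀⟩ := hev
  -- for each n pick a k > N₀ + n with the K-interval inside the i-interval
  have hkk : ∀ n : ℕ, ∃ k > N₀ + n,
      Set.Ico (K k) (K (k + 1)) ⊆ Set.Ico (i (N₀ + n)) (i (N₀ + n + 1)) :=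
    fun n => hN₀ (N₀ + n) (Nat.le_add_right _ _)
  set kk : ℕ → ℕ := fun n => Classical.choose (hkk n) with hkkdef
  have kk_spec : ∀ n, kk n > N₀ + n ∧
      Set.Ico (K (kk n)) (K (kk n + 1)) ⊆ Set.Ico (i (N₀ + n)) (i (N₀ + n + 1)) :=
    fun n => Classical.choose_spec (hkk n)
  set g : ℕ → ℕ := fun n => pick (kk n) (K (kk n)) with hg
  have hgblk : ∀ n, blk (g n) ∈ Set.Ico (i (N₀ + n)) (i (N₀ + n + 1)) := by
    intro n
    apply (kk_spec n).2
    constructor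
    · exact blk_ge (pick_spec (kk n) (K (kk n))).2.2
    · rw [hKs]
      exact Nat.lt_succ_self _
  have hgmem : ∀ n, g n ∈ A ∩ ⋃ lev : ℕ, ⋃ k ∈ Set.Ico (i lev) (i (lev + 1)),
      {x ∈ Set.Ico (j k) (j (k + 1)) | lev ≤ f x} := by
    intro n
    refine ⟨(pick_spec (kk n) (K (kk n))).1, ?_⟩
    refine Set.mem_iUnion.mpr ⟨N₀ + n, ?_⟩
    refine Set.mem_iUnion.mpr ⟨blk (g n), ?_⟩
    refine Set.mem_iUnion.mpr ⟨hgblk n, ?_⟩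
    refine ⟨⟨blk_le (g n), blk_lt (g n)⟩, ?_⟩
    have h1 : kk n ≤ f (g n) := (pick_spec (kk n) (K (kk n))).2.1
    have h2 := (kk_spec n).1
    omega
  have hsm : StrictMono (fun n => blk (g n)) := by
    intro a b hab
    show blk (g a) < blk (g b)
    have h1 : blk (g a) < i (N₀ + a + 1) := (hgblk a).2
    have h2 : i (N₀ + b) ≤ blk (g b) := (hgblk b).1
    have h3 : i (N₀ + a + 1) ≤ i (N₀ + b) := (hD i hiD).2.monotone (by omega)
    omega
  have hginj : Function.Injective g := by
    intro a b hab
    exact hsm.injective (by simp only [hab])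
  exact (Set.infinite_of_injective_forall_mem hginj hgmem) hfin
end

section
/- Let 𝓘 be a tall ideal on ω and define, for a ∈ P(ω), â = {b ⊆ ω : |a ∩ b| = ω}, and 𝓘̂ = {X ⊆ P(ω) : ∃a ∈ 𝓘, X ⊆ â}. Then 𝓘 is a P-ideal if and only if 𝓘̂ is a σ-ideal on P(ω). -/
/-- for a tall ideal `𝓘` on `ω`, with `â = {b : |a ∩ b| = ω}` and
`𝓘̂ = {X ⊆ 𝒫(ω) : ∃ a ∈ 𝓘, X ⊆ â}`, `𝓘` is a P-ideal iff `𝓘̂` is a σ-ideal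
(being an ideal automatically, the condition is closure under countable unions). -/
theorem stmt_17 (I : Set (Set ℕ))
    (hdown : ∀ a b : Set ℕ, a ⊆ b → b ∈ I → a ∈ I)
    (hunion : ∀ a ∈ I, ∀ b ∈ I, a ∪ b ∈ I)
    (hproper : Set.univ ∉ I)
    (hfin : ∀ a : Set ℕ, a.Finite → a ∈ I)
    (htall : ∀ a : Set ℕ, a.Infinite → ∃ b ⊆ a, b.Infinite ∧ b ∈ I) :
    (∀ f : ℕ → Set ℕ, (∀ n, f n ∈ I) → ∃ a ∈ I, ∀ n, (f n \ a).Finite) ↔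
    (∀ g : ℕ → Set (Set ℕ),
      (∀ n, g n ∈ {X : Set (Set ℕ) | ∃ a ∈ I, X ⊆ {b : Set ℕ | (a ∩ b).Infinite}}) →
      (⋃ n, g n) ∈ {X : Set (Set ℕ) | ∃ a ∈ I, X ⊆ {b : Set ℕ | (a ∩ b).Infinite}}) := by
  constructor
  · intro hP g hg
    choose f hfI hfsub using hg
    obtain ⟨a, haI, ha⟩ := hP f hfI
    refine ⟨a, haI, ?_⟩
    rintro b ⟨_, ⟨n, rfl⟩, hb⟩
    have h1 : (f n ∩ b).Infinite := hfsub n hb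
    have h2 : f n ∩ b ⊆ (f n \ a) ∪ (a ∩ b) := by
      intro x hx
      by_cases hxa : x ∈ a
      · exact Or.inr ⟨hxa, hx.2⟩
      · exact Or.inl ⟨hx.1, hxa⟩
    have := h1.mono h2
    rcases (Set.infinite_union.mp this) with h | h
    · exact absurd h (ha n).not_infinite
    · exact h
  · intro hσ f hfI
    obtain ⟨a, haI, ha⟩ := hσ (fun n => {b : Set ℕ | (f n ∩ b).Infinite})
      (fun n => ⟨f n, hfI n, fun b hb => hb⟩)
    refine ⟨a, haI, fun n => ?_⟩
    by_contra hinf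
    have hbmem : (f n \ a) ∈ ⋃ m, {b : Set ℕ | (f m ∩ b).Infinite} := by
      refine Set.mem_iUnion.mpr ⟨n, ?_⟩
      have : f n ∩ (f n \ a) = f n \ a := by
        ext x; simp (config := {contextual := true}) [Set.mem_diff]
      simpa [Set.mem_setOf_eq, this] using (Set.not_infinite.not_right.mp hinf)
    have : (a ∩ (f n \ a)).Infinite := ha hbmem
    have : a ∩ (f n \ a) = ∅ := by
      ext x; simp (config := {contextual := true}) [Set.mem_diff]
    simp_all
end
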